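/- arXiv:2603.06249 — 7 statements merged into one kernel-verified Lean document; each statement's English description precedes it below -/
import Mathlib

section
/- For all integers k ≥ 1 and n > 2k, the canonical bubble B₀ is a smooth, strictly positive function on ℝⁿ and satisfies the k-th order critical equation Δ₀^k B₀ = B₀^{2*_k − 1} on all of ℝⁿ; equivalently, (−1)^k applied to the k-th iterate of the analysts' Laplacian of B₀ equals B₀^{(n+2k)/(n−2k)}. -/
open MeasureTheory Real

/-- The constant `𝔠_{n,k} := (∏_{j=-k}^{k-1} (n+2j))^{1/k}` (reindexed by `j ↦ j - k`). -/
noncomputable def cnk (n k : ℕ) : ℝ :=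
  (∏ j ∈ Finset.range (2 * k), ((n : ℝ) + 2 * j - 2 * k)) ^ ((k : ℝ)⁻¹)

/-- The canonical bubble `B₀(x) = (1 + 𝔠_{n,k}⁻¹ |x|²)^{(2k-n)/2}` on `ℝⁿ`. -/
noncomputable def canonicalBubble (n k : ℕ) (x : EuclideanSpace ℝ (Fin n)) : ℝ :=
  (1 + (cnk n k)⁻¹ * ‖x‖ ^ 2) ^ (((2 * k : ℝ) - n) / 2)

/-- The geometers' Laplacian `Δ₀ = -∑ ∂²/∂xᵢ²` on `ℝⁿ`. -/
noncomputable def lap (n : ℕ) (f : EuclideanSpace ℝ (Fin n) → ℝ) :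
    EuclideanSpace ℝ (Fin n) → ℝ :=
  fun x => -∑ i : Fin n, iteratedFDeriv ℝ 2 f x (fun _ => EuclideanSpace.single i 1)

namespace Stmt0

variable (k n : ℕ)

noncomputable def J : EuclideanSpace ℝ (Fin n) →L[ℝ] EuclideanSpace ℝ (Fin n) →L[ℝ] ℝ :=
  innerSL ℝ

@[simp] lemma J_apply (x : EuclideanSpace ℝ (Fin n)) : J n x = innerSL ℝ x := rfl

noncomputable def phi (p : ℝ) (x : EuclideanSpace ℝ (Fin n)) : ℝ :=
  (1 + (cnk n k)⁻¹ * ‖x‖ ^ 2) ^ p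

lemma prod_pos (hn : 2 * k < n) :
    0 < ∏ j ∈ Finset.range (2 * k), ((n : ℝ) + 2 * j - 2 * k) := by
  apply Finset.prod_pos
  intro j _
  have h1 : (2 * k : ℝ) < n := by exact_mod_cast hn
  have h2 : (0:ℝ) ≤ j := Nat.cast_nonneg j
  linarith

lemma cnk_pos (hn : 2 * k < n) : 0 < cnk n k :=
  Real.rpow_pos_of_pos (prod_pos k n hn) _

lemma cnk_pow (hk : 1 ≤ k) (hn : 2 * k < n) :
    cnk n k ^ k = ∏ j ∈ Finset.range (2 * k), ((n : ℝ) + 2 * j - 2 * k) := by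
  rw [cnk, ← Real.rpow_natCast (_ ^ _) k, ← Real.rpow_mul (prod_pos k n hn).le]
  rw [inv_mul_cancel₀ (Nat.cast_ne_zero.mpr (by omega) : (k:ℝ) ≠ 0), Real.rpow_one]

lemma q_pos (hn : 2 * k < n) (x : EuclideanSpace ℝ (Fin n)) :
    0 < 1 + (cnk n k)⁻¹ * ‖x‖ ^ 2 := by
  have := cnk_pos k n hn
  positivity

lemma phi_pos (hn : 2 * k < n) (p : ℝ) (x : EuclideanSpace ℝ (Fin n)) :
    0 < phi k n p x :=
  Real.rpow_pos_of_pos (q_pos k n hn x) _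

/-- first derivative data -/
noncomputable def Dphi (p : ℝ) (x : EuclideanSpace ℝ (Fin n)) :
    EuclideanSpace ℝ (Fin n) →L[ℝ] ℝ :=
  (2 * (cnk n k)⁻¹ * p * phi k n (p - 1) x) • innerSL ℝ x

lemma hasFDerivAt_q (x : EuclideanSpace ℝ (Fin n)) :
    HasFDerivAt (fun y : EuclideanSpace ℝ (Fin n) => 1 + (cnk n k)⁻¹ * ‖y‖ ^ 2)
      ((2 * (cnk n k)⁻¹) • innerSL ℝ x) x := by
  have h := ((hasFDerivAt_id x).norm_sq.const_mul ((cnk n k)⁻¹)).const_add 1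
  refine h.congr_fderiv ?_
  ext y
  simp [smul_smul, ContinuousLinearMap.smul_apply, two_smul]
  ring

lemma hasFDerivAt_phi (hn : 2 * k < n) (p : ℝ) (x : EuclideanSpace ℝ (Fin n)) :
    HasFDerivAt (phi k n p) (Dphi k n p x) x := by
  have h := (hasFDerivAt_q k n x).rpow_const (p := p) (Or.inl (q_pos k n hn x).ne')
  refine h.congr_fderiv ?_
  rw [Dphi, smul_smul, phi]
  ring_nf

/-- second derivative data -/
noncomputable def D2phi (p : ℝ) (x : EuclideanSpace ℝ (Fin n)) :
    EuclideanSpace ℝ (Fin n) →L[ℝ] EuclideanSpace ℝ (Fin n) →L[ℝ] ℝ :=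
  (2 * (cnk n k)⁻¹ * p * phi k n (p - 1) x) • J n +
    ((2 * (cnk n k)⁻¹ * p) • Dphi k n (p - 1) x).smulRight (innerSL ℝ x)

lemma hasFDerivAt_Dphi (hn : 2 * k < n) (p : ℝ) (x : EuclideanSpace ℝ (Fin n)) :
    HasFDerivAt (Dphi k n p) (D2phi k n p x) x := by
  have hs : HasFDerivAt (fun y => 2 * (cnk n k)⁻¹ * p * phi k n (p - 1) y)
      ((2 * (cnk n k)⁻¹ * p) • Dphi k n (p - 1) x) x :=
    (hasFDerivAt_phi k n hn (p - 1) x).const_mul _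
  have hJ : HasFDerivAt (fun y : EuclideanSpace ℝ (Fin n) => innerSL ℝ y) (J n) x := (J n).hasFDerivAt
  exact hs.smul hJ


lemma sum_sq (x : EuclideanSpace ℝ (Fin n)) : ∑ i : Fin n, x i * x i = ‖x‖ ^ 2 := by
  rw [EuclideanSpace.norm_eq, Real.sq_sqrt (by positivity)]
  simp [sq, Real.norm_eq_abs]

lemma D2phi_diag (p : ℝ) (x : EuclideanSpace ℝ (Fin n)) :
    ∑ i : Fin n, D2phi k n p x (EuclideanSpace.single i 1) (EuclideanSpace.single i 1)
      = n * (2 * (cnk n k)⁻¹ * p * phi k n (p - 1) x)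
        + (2 * (cnk n k)⁻¹ * p) * (2 * (cnk n k)⁻¹ * (p - 1) * phi k n (p - 2) x) * ‖x‖ ^ 2 := by
  have hss : ∀ i : Fin n,
      D2phi k n p x (EuclideanSpace.single i 1) (EuclideanSpace.single i 1)
      = 2 * (cnk n k)⁻¹ * p * phi k n (p - 1) x
        + (2 * (cnk n k)⁻¹ * p) * (2 * (cnk n k)⁻¹ * (p - 1) * phi k n (p - 2) x) * (x i * x i) := by
    intro i
    simp [D2phi, Dphi, ContinuousLinearMap.smul_apply, ContinuousLinearMap.smulRight_apply,
      EuclideanSpace.inner_single_right, EuclideanSpace.inner_single_left,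
      EuclideanSpace.single_apply, real_inner_smul_left]
    ring
  rw [Finset.sum_congr rfl (fun i _ => hss i), Finset.sum_add_distrib, Finset.sum_const,
    ← Finset.mul_sum, sum_sq]
  simp [mul_comm]

lemma fderiv_phi (hn : 2 * k < n) (p : ℝ) : fderiv ℝ (phi k n p) = Dphi k n p :=
  funext fun x => (hasFDerivAt_phi k n hn p x).fderiv

lemma lap_phi (hn : 2 * k < n) (p : ℝ) (x : EuclideanSpace ℝ (Fin n)) :
    lap n (phi k n p) x = (cnk n k)⁻¹ *
      ((-2 * p * ((n : ℝ) + 2 * p - 2)) * phi k n (p - 1) x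
        + (4 * p * (p - 1)) * phi k n (p - 2) x) := by
  have h2 : ∀ i : Fin n, iteratedFDeriv ℝ 2 (phi k n p) x (fun _ => EuclideanSpace.single i 1)
      = D2phi k n p x (EuclideanSpace.single i 1) (EuclideanSpace.single i 1) := by
    intro i
    rw [iteratedFDeriv_two_apply, fderiv_phi k n hn p, (hasFDerivAt_Dphi k n hn p x).fderiv]
  rw [lap]
  simp only [h2]
  rw [D2phi_diag k n p x]
  have hq := q_pos k n hn x
  have hc : cnk n k ≠ 0 := (cnk_pos k n hn).ne'
  have hx2 : ‖x‖ ^ 2 = cnk n k * ((1 + (cnk n k)⁻¹ * ‖x‖ ^ 2) - 1) := by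
    field_simp
    ring
  have hphi1 : phi k n (p - 1) x = phi k n (p - 2) x * (1 + (cnk n k)⁻¹ * ‖x‖ ^ 2) := by
    rw [phi, phi, ← Real.rpow_add_one hq.ne']
    ring_nf
  rw [hx2, hphi1]
  field_simp
  ring


lemma contDiff_phi (hn : 2 * k < n) (p : ℝ) : ContDiff ℝ (⊤ : ℕ∞) (phi k n p) := by
  rw [contDiff_iff_contDiffAt]
  intro x
  apply ContDiffAt.rpow_const_of_ne
  · exact (contDiff_const.add (contDiff_const.mul (contDiff_norm_sq ℝ))).contDiffAt
  · exact (q_pos k n hn x).ne'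

lemma lap_sum (hn : 2 * k < n) (m : ℕ) (d e : ℕ → ℝ) (x : EuclideanSpace ℝ (Fin n)) :
    lap n (fun y => ∑ i ∈ Finset.range m, d i * phi k n (e i) y) x
      = ∑ i ∈ Finset.range m, d i * lap n (phi k n (e i)) x := by
  have h1 : ∀ q : Fin n,
      iteratedFDeriv ℝ 2 (fun y => ∑ i ∈ Finset.range m, d i * phi k n (e i) y) x
        (fun _ => EuclideanSpace.single q 1)
      = ∑ i ∈ Finset.range m,
          d i * iteratedFDeriv ℝ 2 (phi k n (e i)) x (fun _ => EuclideanSpace.single q 1) := by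
    intro q
    rw [show (fun y => ∑ i ∈ Finset.range m, d i * phi k n (e i) y)
          = (fun y => ∑ i ∈ Finset.range m, (d i • phi k n (e i)) y) from rfl,
      iteratedFDeriv_sum (f := fun i => d i • phi k n (e i))
        (fun i _ => ((contDiff_phi k n hn (e i)).of_le (by exact WithTop.coe_le_coe.mpr le_top)).const_smul (d i))]
    simp only [Finset.sum_apply, ContinuousMultilinearMap.sum_apply]
    refine Finset.sum_congr rfl fun i _ => ?_
    have : (fun y => d i * phi k n (e i) y) = d i • phi k n (e i) := rfl
    rw [iteratedFDeriv_const_smul_apply ((contDiff_phi k n hn (e i)).of_le (by exact WithTop.coe_le_coe.mpr le_top)).contDiffAt]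
    rfl
  rw [lap]
  simp only [h1]
  rw [Finset.sum_comm]
  rw [← Finset.sum_neg_distrib]
  refine Finset.sum_congr rfl fun i _ => ?_
  rw [lap, ← Finset.mul_sum]
  ring


/-- `P j = ∏_{m<j} (n - 2k + 2m)` -/
noncomputable def Pc (j : ℕ) : ℝ := ∏ m ∈ Finset.range j, ((n : ℝ) - 2 * k + 2 * m)
/-- `Q i j = ∏_{i ≤ m < j} (2k - 2 - 2m)` -/
noncomputable def Qc (i j : ℕ) : ℝ := ∏ m ∈ Finset.Ico i j, (2 * (k : ℝ) - 2 - 2 * m)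
/-- `R i j = ∏_{m<i} (n - 2k + 2j + 2m)` -/
noncomputable def Rc (i j : ℕ) : ℝ := ∏ m ∈ Finset.range i, ((n : ℝ) - 2 * k + 2 * j + 2 * m)

noncomputable def cc (j i : ℕ) : ℝ := (j.choose i) * Pc k n j * Qc k i j * Rc k n i j

lemma Pc_succ (j : ℕ) : Pc k n (j + 1) = Pc k n j * ((n : ℝ) - 2 * k + 2 * j) :=
  Finset.prod_range_succ _ j

lemma Rc_succ (i j : ℕ) :
    Rc k n (i + 1) j = Rc k n i j * ((n : ℝ) - 2 * k + 2 * j + 2 * i) :=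
  Finset.prod_range_succ _ i

lemma Qc_succ_top (i j : ℕ) (h : i ≤ j) :
    Qc k i (j + 1) = Qc k i j * (2 * (k : ℝ) - 2 - 2 * j) :=
  Finset.prod_Ico_succ_top h _

lemma Qc_succ_bot (i j : ℕ) (h : i < j) :
    Qc k i j = (2 * (k : ℝ) - 2 - 2 * i) * Qc k (i + 1) j :=
  Finset.prod_eq_prod_Ico_succ_bot h _

lemma Qc_self (i : ℕ) : Qc k i i = 1 := by simp [Qc]

/-- Shift lemma: `R i j * (A + 2j + 2i) = (A + 2j) * R i (j+1)`. -/
lemma Rc_shift (i j : ℕ) :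
    Rc k n i j * ((n : ℝ) - 2 * k + 2 * j + 2 * i)
      = ((n : ℝ) - 2 * k + 2 * j) * Rc k n i (j + 1) := by
  have h1 := Finset.prod_range_succ (fun m : ℕ => ((n : ℝ) - 2 * k + 2 * j + 2 * m)) i
  have h2 := Finset.prod_range_succ' (fun m : ℕ => ((n : ℝ) - 2 * k + 2 * j + 2 * m)) i
  have h3 : ∀ m : ℕ, (n : ℝ) - 2 * k + 2 * j + 2 * (m + 1 : ℕ)
      = (n : ℝ) - 2 * k + 2 * (j + 1 : ℕ) + 2 * m := by
    intro m; push_cast; ring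
  rw [Rc, ← h1, h2]
  simp only [h3]
  rw [Rc]
  push_cast
  ring

/-- recurrence, case i = 0 -/
lemma cc_rec_zero (j : ℕ) :
    cc k n (j + 1) 0
      = ((n : ℝ) - 2 * k + 2 * j + 2 * 0) * (2 * k - 2 * j - 2 * 0 - 2) * cc k n j 0 := by
  simp only [cc, Nat.choose_zero_right, Pc_succ, Qc_succ_top k 0 j (Nat.zero_le j)]
  simp [Rc]
  ring

/-- recurrence, main case 1 ≤ i = s+1 ≤ j -/
lemma cc_rec_mid (j s : ℕ) (hs : s < j) :
    cc k n (j + 1) (s + 1)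
      = ((n : ℝ) - 2 * k + 2 * j + 2 * (s + 1)) * (2 * k - 2 * j - 2 * (s + 1) - 2)
          * cc k n j (s + 1)
        + ((n : ℝ) - 2 * k + 2 * j + 2 * (s + 1) - 2) * ((n : ℝ) - 2 * k + 2 * j + 2 * (s + 1))
          * cc k n j s := by
  have hch : ((j.choose (s + 1) : ℕ) : ℝ) * ((s : ℝ) + 1)
      = ((j.choose s : ℕ) : ℝ) * ((j : ℝ) - s) := by
    have h0 := Nat.choose_succ_right_eq j s
    have h1 : ((j.choose (s + 1) * (s + 1) : ℕ) : ℝ) = ((j.choose s * (j - s) : ℕ) : ℝ) := by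
      exact_mod_cast congrArg (fun t : ℕ => (t : ℝ)) h0
    push_cast [Nat.cast_sub hs.le] at h1
    linarith
  have hpasc : (((j + 1).choose (s + 1) : ℕ) : ℝ)
      = ((j.choose s : ℕ) : ℝ) + ((j.choose (s + 1) : ℕ) : ℝ) := by
    exact_mod_cast Nat.choose_succ_succ j s
  have e1 := Rc_shift k n s j
  simp only [cc, Pc_succ, Qc_succ_top k (s + 1) j hs, Qc_succ_bot k s j hs, Rc_succ, hpasc]
  push_cast
  linear_combination (2 * Pc k n j * Qc k (s + 1) j * ((( n : ℝ) - 2 * k + 2 * j) + 2 * s + 2)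
      * (((n : ℝ) - 2 * k + 2 * j)) * Rc k n s (j + 1)) * hch
    - (Pc k n j * Qc k (s + 1) j * (((n : ℝ) - 2 * k + 2 * j) + 2 * s + 2)
      * (((j.choose (s + 1) : ℕ) : ℝ) * (2 * k - 2 * j - 2 * s - 4)
        + ((j.choose s : ℕ) : ℝ) * (2 * k - 2 - 2 * s))) * e1

/-- recurrence, top case i = j+1 -/
lemma cc_rec_top (j : ℕ) :
    cc k n (j + 1) (j + 1)
      = ((n : ℝ) - 2 * k + 2 * j + 2 * (j + 1) - 2) * ((n : ℝ) - 2 * k + 2 * j + 2 * (j + 1))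
          * cc k n j j := by
  have e1 := Rc_shift k n j j
  simp only [cc, Nat.choose_self, Pc_succ, Qc_self, Rc_succ]
  push_cast
  linear_combination (-(Pc k n j * (((n : ℝ) - 2 * k + 2 * j) + 2 * j + 2))) * e1

lemma cc_top_zero (j : ℕ) : cc k n j (j + 1) = 0 := by
  simp [cc, Nat.choose_succ_self]


noncomputable def al (j i : ℕ) : ℝ :=
  ((n : ℝ) - 2 * k + 2 * j + 2 * i) * (2 * k - 2 * j - 2 * i - 2)

noncomputable def be (j i : ℕ) : ℝ :=
  ((n : ℝ) - 2 * k + 2 * j + 2 * i) * ((n : ℝ) - 2 * k + 2 * j + 2 * i + 2)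

lemma cc_rec (j i : ℕ) (hi : i < j + 2) :
    cc k n (j + 1) i = al k n j i * cc k n j i
      + (if i = 0 then 0 else be k n j (i - 1) * cc k n j (i - 1)) := by
  match i with
  | 0 =>
    simp only [if_pos rfl, add_zero, al]
    have := cc_rec_zero k n j
    push_cast at this ⊢
    linarith [this]
  | (s+1) =>
    simp only [Nat.add_sub_cancel, if_neg (Nat.succ_ne_zero s)]
    rcases lt_or_eq_of_le (by omega : s ≤ j) with hs | hs
    · have := cc_rec_mid k n j s hs
      rw [this, al, be]
      push_cast
      ring
    · subst hs
      have := cc_rec_top k n s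
      rw [this, cc_top_zero, al, be]
      push_cast
      ring

/-- The main induction. -/
lemma lap_iter (hn : 2 * k < n) (j : ℕ) :
    ∀ x, (lap n)^[j] (phi k n (((2 * k : ℝ) - n) / 2)) x
      = ∑ i ∈ Finset.range (j + 1),
          ((cnk n k)⁻¹ ^ j * cc k n j i) * phi k n (((2 * k : ℝ) - n) / 2 - j - i) x := by
  set p₀ : ℝ := ((2 * k : ℝ) - n) / 2 with hp₀
  induction j with
  | zero =>
    intro x
    simp [cc, Pc, Qc, Rc]
  | succ j ih =>
    intro x
    rw [Function.iterate_succ_apply',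
      show (lap n)^[j] (phi k n p₀)
        = fun y => ∑ i ∈ Finset.range (j + 1),
            ((cnk n k)⁻¹ ^ j * cc k n j i) * phi k n (p₀ - j - i) y from funext ih,
      lap_sum k n hn (j + 1) (fun i => (cnk n k)⁻¹ ^ j * cc k n j i) (fun i => p₀ - j - i) x]
    have hstep : ∀ i : ℕ, lap n (phi k n (p₀ - j - i)) x
        = (cnk n k)⁻¹ * (al k n j i * phi k n (p₀ - (j + 1 : ℕ) - i) x
            + be k n j i * phi k n (p₀ - (j + 1 : ℕ) - (i + 1 : ℕ)) x) := by
      intro i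
      rw [lap_phi k n hn (p₀ - j - i) x,
        show p₀ - ↑j - ↑i - 1 = p₀ - (j + 1 : ℕ) - i by push_cast; ring,
        show p₀ - ↑j - ↑i - 2 = p₀ - (j + 1 : ℕ) - (i + 1 : ℕ) by push_cast; ring,
        al, be, hp₀]
      push_cast
      ring
    calc
      ∑ i ∈ Finset.range (j + 1),
          ((cnk n k)⁻¹ ^ j * cc k n j i) * lap n (phi k n (p₀ - j - i)) x
        = (∑ i ∈ Finset.range (j + 1), ((cnk n k)⁻¹ ^ (j+1) * (cc k n j i * al k n j i))
              * phi k n (p₀ - (j + 1 : ℕ) - i) x)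
          + ∑ i ∈ Finset.range (j + 1), ((cnk n k)⁻¹ ^ (j+1) * (cc k n j i * be k n j i))
              * phi k n (p₀ - (j + 1 : ℕ) - (i + 1 : ℕ)) x := by
          rw [← Finset.sum_add_distrib]
          refine Finset.sum_congr rfl fun i _ => ?_
          rw [hstep i, pow_succ]
          ring
      _ = ∑ i ∈ Finset.range (j + 2), ((cnk n k)⁻¹ ^ (j + 1) * cc k n (j + 1) i)
            * phi k n (p₀ - (j + 1 : ℕ) - i) x := by
          have h1 : (∑ i ∈ Finset.range (j + 2),
                ((cnk n k)⁻¹ ^ (j+1) * (cc k n j i * al k n j i))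
                * phi k n (p₀ - (j + 1 : ℕ) - i) x)
              = ∑ i ∈ Finset.range (j + 1),
                ((cnk n k)⁻¹ ^ (j+1) * (cc k n j i * al k n j i))
                * phi k n (p₀ - (j + 1 : ℕ) - i) x := by
            rw [Finset.sum_range_succ, cc_top_zero]
            ring
          have h2 : (∑ i ∈ Finset.range (j + 2),
                ((cnk n k)⁻¹ ^ (j+1)
                  * (if i = 0 then 0 else cc k n j (i - 1) * be k n j (i - 1)))
                * phi k n (p₀ - (j + 1 : ℕ) - i) x)
              = ∑ i ∈ Finset.range (j + 1),
                ((cnk n k)⁻¹ ^ (j+1) * (cc k n j i * be k n j i))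
                * phi k n (p₀ - (j + 1 : ℕ) - (i + 1 : ℕ)) x := by
            rw [Finset.sum_range_succ' (fun i =>
              ((cnk n k)⁻¹ ^ (j+1)
                  * (if i = 0 then 0 else cc k n j (i - 1) * be k n j (i - 1)))
                * phi k n (p₀ - (j + 1 : ℕ) - i) x) (j + 1)]
            simp [Nat.succ_ne_zero]
          rw [← h1, ← h2, ← Finset.sum_add_distrib]
          refine Finset.sum_congr rfl fun i hi => ?_
          rw [cc_rec k n j i (Finset.mem_range.mp hi)]
          ring


lemma cc_kk (hk : 1 ≤ k) (hn : 2 * k < n) : cc k n k k = cnk n k ^ k := by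
  rw [cc, Nat.choose_self, Qc_self, cnk_pow k n hk hn,
    show 2 * k = k + k from two_mul k, Finset.prod_range_add]
  rw [Nat.cast_one, one_mul, mul_one]
  congr 1
  · exact Finset.prod_congr rfl fun m _ => by push_cast; ring
  · exact Finset.prod_congr rfl fun m _ => by push_cast; ring

lemma cc_ki_zero (hk : 1 ≤ k) (i : ℕ) (hik : i < k) : cc k n k i = 0 := by
  have hQ : Qc k i k = 0 := by
    apply Finset.prod_eq_zero (i := k - 1)
    · exact Finset.mem_Ico.mpr ⟨by omega, by omega⟩
    · push_cast [Nat.cast_sub hk]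
      ring
  simp [cc, hQ]

end Stmt0

theorem stmt0 (k n : ℕ) (hk : 1 ≤ k) (hn : 2 * k < n) :
    ContDiff ℝ (⊤ : ℕ∞) (canonicalBubble n k) ∧
    (∀ x, 0 < canonicalBubble n k x) ∧
    (∀ x, (lap n)^[k] (canonicalBubble n k) x =
      canonicalBubble n k x ^ (((n : ℝ) + 2 * k) / ((n : ℝ) - 2 * k))) := by
  have hB : canonicalBubble n k = Stmt0.phi k n (((2 * k : ℝ) - n) / 2) := rfl
  refine ⟨?_, ?_, ?_⟩
  · rw [hB]; exact Stmt0.contDiff_phi k n hn _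
  · intro x; rw [hB]; exact Stmt0.phi_pos k n hn _ x
  · intro x
    rw [hB, Stmt0.lap_iter k n hn k x]
    rw [Finset.sum_eq_single k
      (fun b hbm hbk => by
        have hb : b < k := by have := Finset.mem_range.mp hbm; omega
        rw [Stmt0.cc_ki_zero k n hk b hb, mul_zero, zero_mul])
      (fun hnk => absurd (Finset.self_mem_range_succ k) hnk)]
    have hc := Stmt0.cnk_pos k n hn
    have hne : (n : ℝ) - 2 * k ≠ 0 := by
      have h1 : (2 * k : ℝ) < n := by exact_mod_cast hn
      linarith
    rw [Stmt0.cc_kk k n hk hn, inv_pow, inv_mul_cancel₀ (pow_ne_zero _ hc.ne'), one_mul]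
    rw [Stmt0.phi, Stmt0.phi, ← Real.rpow_mul (le_of_lt (Stmt0.q_pos k n hn x))]
    congr 1
    field_simp
    ring
end

section
/- For all integers k ≥ 1 and n > 2k, with b_{n,k} defined by b_{n,k}^{−1} := 2^{k−1}(k−1)!·(n−2)(n−4)···(n−2k)·ω_{n−1}, where ω_{n−1} is the surface measure of the unit sphere S^{n−1} ⊂ ℝⁿ, one has the integral identity b_{n,k} · ∫_{ℝⁿ} B₀^{2*_k − 1} dx = 𝔠_{n,k}^{(n−2k)/2}. -/
open MeasureTheory Real

/-- The surface measure `ω_{n-1}` of the unit sphere `S^{n-1} ⊂ ℝⁿ`, expressed via the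
standard identity `ω_{n-1} = n · vol(B(0,1))`. -/
noncomputable def sphereSurface (n : ℕ) : ℝ :=
  n * (volume (Metric.ball (0 : EuclideanSpace ℝ (Fin n)) 1)).toReal

open Set Filter Topology

/-!
Writing `𝔠 = 𝔠_{n,k}`, the integrand is `(1 + 𝔠⁻¹|x|²)^{-(n+2k)/2}`. Scaling `x ↦ √𝔠 x` and passing
to polar coordinates turn the integral into `𝔠^{n/2} · n|B₁| · J(n+2k)`, where
`J(a) = ∫₀^∞ t^{n-1} (1+t²)^{-a/2} dt`. Integrating `d/dt (tⁿ (1+t²)^{-a/2})` over `(0, ∞)` gives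
`a J(a+2) = (a-n) J(a)` for `a > n` and `n J(n+2) = 1`, hence
`J(n+2k) = 2^{k-1}(k-1)! / (n(n+2)⋯(n+2k-2))`. Finally `𝔠^k = ∏_{j=-k}^{k-1}(n+2j)` is the product
of `(n-2)⋯(n-2k)`, which cancels against `b`, and of `n(n+2)⋯(n+2k-2)`, which cancels against `J`.
-/

noncomputable def radialMoment (n : ℕ) (a : ℝ) : ℝ :=
  ∫ t in Ioi (0 : ℝ), t ^ (n - 1) * (1 + t ^ 2) ^ (-a / 2)

lemma integrableOn_pow_mul_one_add_sq_rpow {m : ℕ} {a : ℝ} (h : (m : ℝ) + 1 < a) :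
    IntegrableOn (fun t : ℝ => t ^ m * (1 + t ^ 2) ^ (-a / 2)) (Ioi 0) := by
  have hcont : Continuous fun t : ℝ => t ^ m * (1 + t ^ 2) ^ (-a / 2) :=
    (continuous_pow m).mul ((continuous_const.add (continuous_pow 2)).rpow_const
      fun t => Or.inl (by simp; positivity))
  rw [← Ioc_union_Ioi_eq_Ioi zero_le_one]
  refine hcont.integrableOn_Ioc.union ?_
  refine (integrableOn_Ioi_rpow_of_lt (by linarith : (m : ℝ) - a < -1) one_pos).mono'
    hcont.aestronglyMeasurable.restrict ?_
  filter_upwards [ae_restrict_mem measurableSet_Ioi] with t (ht : 1 < t)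
  have ht0 : 0 < t := one_pos.trans ht
  rw [Real.norm_of_nonneg (by positivity)]
  calc t ^ m * (1 + t ^ 2) ^ (-a / 2) ≤ t ^ m * (t ^ 2) ^ (-a / 2) := by
        refine mul_le_mul_of_nonneg_left (Real.rpow_le_rpow_of_nonpos (by positivity)
          (by linarith) (by linarith [m.cast_nonneg (α := ℝ)])) (by positivity)
    _ = t ^ ((m : ℝ) - a) := by
        rw [← Real.rpow_natCast, ← Real.rpow_natCast t 2, ← Real.rpow_mul ht0.le,
          ← Real.rpow_add ht0]
        push_cast; ring_nf

lemma hasDerivAt_pow_mul_one_add_sq_rpow {n : ℕ} (hn : n ≠ 0) (a t : ℝ) :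
    HasDerivAt (fun t : ℝ => t ^ n * (1 + t ^ 2) ^ (-a / 2))
      ((n - a) * (t ^ (n - 1) * (1 + t ^ 2) ^ (-a / 2))
        + a * (t ^ (n - 1) * (1 + t ^ 2) ^ (-(a + 2) / 2))) t := by
  have hpos : 0 < 1 + t ^ 2 := by positivity
  have hbase : HasDerivAt (fun t : ℝ => 1 + t ^ 2) (2 * t) t := by
    simpa using (hasDerivAt_pow 2 t).const_add 1
  refine ((hasDerivAt_pow n t).mul
    (hbase.rpow_const (p := -a / 2) (Or.inl hpos.ne'))).congr_deriv ?_
  have hsplit : (1 + t ^ 2) ^ (-a / 2) = (1 + t ^ 2) ^ (-(a + 2) / 2) * (1 + t ^ 2) := by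
    rw [← Real.rpow_add_one hpos.ne']; ring_nf
  obtain ⟨m, rfl⟩ := Nat.exists_eq_succ_of_ne_zero hn
  rw [show -a / 2 - 1 = -(a + 2) / 2 by ring, hsplit]
  simp only [Nat.succ_sub_one, pow_succ]
  push_cast
  ring

lemma tendsto_pow_mul_one_add_sq_rpow_neg_self (n : ℕ) :
    Tendsto (fun t : ℝ => t ^ n * (1 + t ^ 2) ^ (-(n : ℝ) / 2)) atTop (𝓝 1) := by
  have hratio : Tendsto (fun t : ℝ => t ^ 2 / (1 + t ^ 2)) atTop (𝓝 1) := by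
    have hinv : Tendsto (fun t : ℝ => (1 + t ^ 2)⁻¹) atTop (𝓝 0) :=
      tendsto_inv_atTop_zero.comp
        (tendsto_atTop_add_const_left _ 1 (tendsto_pow_atTop two_ne_zero))
    have := hinv.const_sub (1 : ℝ)
    rw [sub_zero] at this
    refine this.congr fun t => ?_
    field_simp
    ring
  have := hratio.rpow_const (p := (n : ℝ) / 2) (Or.inr (by positivity))
  rw [Real.one_rpow] at this
  refine this.congr' ?_
  filter_upwards [eventually_gt_atTop 0] with t ht
  have hpow : (t ^ 2) ^ ((n : ℝ) / 2) = t ^ n := by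
    rw [← Real.rpow_natCast t 2, ← Real.rpow_mul ht.le, Nat.cast_ofNat,
      mul_div_cancel₀ _ two_ne_zero, Real.rpow_natCast]
  rw [Real.div_rpow (by positivity) (by positivity), hpow, neg_div,
    Real.rpow_neg (by positivity), div_eq_mul_inv]

lemma tendsto_pow_mul_one_add_sq_rpow_of_lt {n : ℕ} {a : ℝ} (ha : n < a) :
    Tendsto (fun t : ℝ => t ^ n * (1 + t ^ 2) ^ (-a / 2)) atTop (𝓝 0) := by
  have hdecay : Tendsto (fun t : ℝ => (1 + t ^ 2) ^ (-((a - n) / 2))) atTop (𝓝 0) :=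
    (tendsto_rpow_neg_atTop (by linarith)).comp
      (tendsto_atTop_add_const_left _ 1 (tendsto_pow_atTop two_ne_zero))
  have := (tendsto_pow_mul_one_add_sq_rpow_neg_self n).mul hdecay
  rw [one_mul] at this
  refine this.congr fun t => ?_
  rw [mul_assoc, ← Real.rpow_add (by positivity)]
  ring_nf

/-- For `a = n` the integral `radialMoment n a` diverges (so it is the junk value `0`), but it
carries the factor `a - n = 0`. -/
lemma mul_radialMoment_add_two {n : ℕ} (hn : n ≠ 0) {a L : ℝ} (ha : n ≤ a)
    (hL : Tendsto (fun t : ℝ => t ^ n * (1 + t ^ 2) ^ (-a / 2)) atTop (𝓝 L)) :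
    a * radialMoment n (a + 2) = (a - n) * radialMoment n a + L := by
  have hn1 : ((n - 1 : ℕ) : ℝ) + 1 = n := by
    rw [Nat.cast_sub (Nat.one_le_iff_ne_zero.mpr hn)]; ring
  have hint₁ : IntegrableOn
      (fun t : ℝ => ((n : ℝ) - a) * (t ^ (n - 1) * (1 + t ^ 2) ^ (-a / 2))) (Ioi 0) := by
    rcases ha.eq_or_lt with rfl | ha
    · simp
    · exact (integrableOn_pow_mul_one_add_sq_rpow (by linarith)).const_mul _
  have hint₂ : IntegrableOn
      (fun t : ℝ => a * (t ^ (n - 1) * (1 + t ^ 2) ^ (-(a + 2) / 2))) (Ioi 0) :=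
    (integrableOn_pow_mul_one_add_sq_rpow (by linarith)).const_mul _
  have hftc := integral_Ioi_of_hasDerivAt_of_tendsto'
    (fun t _ => hasDerivAt_pow_mul_one_add_sq_rpow hn a t) (hint₁.add hint₂) hL
  rw [integral_add hint₁ hint₂, integral_const_mul, integral_const_mul,
    zero_pow hn, zero_mul, sub_zero] at hftc
  unfold radialMoment
  linear_combination hftc

lemma radialMoment_natCast_add_two_mul {n : ℕ} (hn : n ≠ 0) {k : ℕ} (hk : 1 ≤ k) :
    radialMoment n (n + 2 * k) =
      2 ^ (k - 1) * (k - 1).factorial / ∏ i ∈ Finset.range k, ((n : ℝ) + 2 * i) := by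
  have hn0 : (0 : ℝ) < n := by positivity
  induction k, hk using Nat.le_induction with
  | base =>
    have := mul_radialMoment_add_two hn le_rfl (tendsto_pow_mul_one_add_sq_rpow_neg_self n)
    field_simp
    simpa [mul_comm] using this
  | succ k hk ih =>
    have hk0 : (0 : ℝ) < k := by exact_mod_cast hk
    have := mul_radialMoment_add_two hn (a := n + 2 * k) (by linarith)
      (tendsto_pow_mul_one_add_sq_rpow_of_lt (by linarith))
    obtain ⟨j, rfl⟩ := Nat.exists_eq_add_of_le' hk
    rw [ih, show (n : ℝ) + 2 * (j + 1 : ℕ) + 2 = n + 2 * (j + 1 + 1 : ℕ) by push_cast; ring] at this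
    rw [Finset.prod_range_succ, Nat.add_sub_cancel, Nat.factorial_succ, pow_succ]
    have hP : 0 < ∏ i ∈ Finset.range (j + 1), ((n : ℝ) + 2 * i) :=
      Finset.prod_pos fun i _ => by positivity
    rw [eq_div_iff (by positivity)]
    push_cast at this ⊢
    field_simp at this
    linear_combination this

section Euclidean

variable {E : Type*} [NormedAddCommGroup E] [InnerProductSpace ℝ E] [FiniteDimensional ℝ E]
  [MeasurableSpace E] [BorelSpace E] (μ : Measure E) [μ.IsAddHaarMeasure]

lemma integral_one_add_norm_sq_rpow [Nontrivial E] (a : ℝ) :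
    ∫ x, (1 + ‖x‖ ^ 2) ^ (-a / 2) ∂μ =
      Module.finrank ℝ E * μ.real (Metric.ball 0 1) * radialMoment (Module.finrank ℝ E) a := by
  rw [integral_fun_norm_addHaar μ fun r => (1 + r ^ 2) ^ (-a / 2), radialMoment,
    nsmul_eq_mul, smul_eq_mul, mul_assoc]
  rfl

lemma integral_one_add_inv_mul_norm_sq_rpow {c : ℝ} (hc : 0 < c) (p : ℝ) :
    ∫ x, (1 + c⁻¹ * ‖x‖ ^ 2) ^ p ∂μ = √c ^ Module.finrank ℝ E * ∫ x, (1 + ‖x‖ ^ 2) ^ p ∂μ := by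
  rw [← smul_eq_mul,
    ← Measure.integral_comp_inv_smul_of_nonneg μ (fun x => (1 + ‖x‖ ^ 2) ^ p) (Real.sqrt_nonneg c)]
  congr with x
  rw [norm_smul, mul_pow, norm_inv, Real.norm_of_nonneg (Real.sqrt_nonneg c), inv_pow,
    Real.sq_sqrt hc.le]

end Euclidean

lemma prod_range_two_mul_add_two_mul_sub (x : ℝ) (k : ℕ) :
    ∏ j ∈ Finset.range (2 * k), (x + 2 * j - 2 * k) =
      (∏ i ∈ Finset.range k, (x - 2 * (i + 1))) * ∏ i ∈ Finset.range k, (x + 2 * i) := by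
  rw [two_mul, Finset.prod_range_add, ← Finset.prod_range_reflect]
  congr 1 <;> refine Finset.prod_congr rfl fun i hi => ?_
  · rw [Nat.cast_sub (by simp at hi; omega), Nat.cast_sub (by simp at hi; omega)]
    push_cast; ring
  · push_cast; ring

lemma prod_range_two_mul_add_two_mul_sub_pos {n k : ℕ} (hn : 2 * k < n) :
    0 < ∏ j ∈ Finset.range (2 * k), ((n : ℝ) + 2 * j - 2 * k) := by
  have : (2 * k : ℝ) < n := by exact_mod_cast hn
  exact Finset.prod_pos fun j _ => by linarith [j.cast_nonneg (α := ℝ)]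

lemma cnk_pos {n k : ℕ} (hn : 2 * k < n) : 0 < cnk n k :=
  Real.rpow_pos_of_pos (prod_range_two_mul_add_two_mul_sub_pos hn) _

lemma cnk_rpow_natCast {n k : ℕ} (hk : k ≠ 0) (hn : 2 * k < n) :
    cnk n k ^ (k : ℝ) = ∏ j ∈ Finset.range (2 * k), ((n : ℝ) + 2 * j - 2 * k) := by
  rw [cnk, ← Real.rpow_mul (prod_range_two_mul_add_two_mul_sub_pos hn).le,
    inv_mul_cancel₀ (by exact_mod_cast hk), Real.rpow_one]

lemma canonicalBubble_rpow_criticalExponent {n k : ℕ} (hn : 2 * k < n)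
    (x : EuclideanSpace ℝ (Fin n)) :
    canonicalBubble n k x ^ (((n : ℝ) + 2 * k) / ((n : ℝ) - 2 * k)) =
      (1 + (cnk n k)⁻¹ * ‖x‖ ^ 2) ^ (-((n : ℝ) + 2 * k) / 2) := by
  have hnk : (n : ℝ) - 2 * k ≠ 0 := by
    have : (2 * k : ℝ) < n := by exact_mod_cast hn
    linarith
  have := cnk_pos hn
  rw [canonicalBubble, ← Real.rpow_mul (by positivity)]
  congr 1
  field_simp
  ring

theorem stmt2 (k n : ℕ) (hk : 1 ≤ k) (hn : 2 * k < n) (b : ℝ)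
    (hb : b⁻¹ = 2 ^ (k - 1) * (Nat.factorial (k - 1) : ℝ) *
      (∏ i ∈ Finset.range k, ((n : ℝ) - 2 * (i + 1))) * sphereSurface n) :
    b * ∫ x : EuclideanSpace ℝ (Fin n),
        canonicalBubble n k x ^ (((n : ℝ) + 2 * k) / ((n : ℝ) - 2 * k)) =
      cnk n k ^ (((n : ℝ) - 2 * k) / 2) := by
  have : NeZero n := ⟨by omega⟩
  have hc := cnk_pos hn
  simp_rw [canonicalBubble_rpow_criticalExponent hn]
  rw [integral_one_add_inv_mul_norm_sq_rpow volume hc, integral_one_add_norm_sq_rpow,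
    finrank_euclideanSpace_fin, radialMoment_natCast_add_two_mul (NeZero.ne n) hk,
    ← inv_inv b, hb, sphereSurface, measureReal_def]
  have hsqrt : √(cnk n k) ^ n = cnk n k ^ ((n : ℝ) / 2) := by
    rw [Real.sqrt_eq_rpow, ← Real.rpow_natCast, ← Real.rpow_mul hc.le]
    ring_nf
  have hsplit : cnk n k ^ (((n : ℝ) - 2 * k) / 2) = cnk n k ^ ((n : ℝ) / 2) /
      ((∏ i ∈ Finset.range k, ((n : ℝ) - 2 * (i + 1))) *
        ∏ i ∈ Finset.range k, ((n : ℝ) + 2 * i)) := by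
    rw [← prod_range_two_mul_add_two_mul_sub, ← cnk_rpow_natCast (by omega) hn,
      ← Real.rpow_sub hc]
    ring_nf
  have hV : 0 < (volume (Metric.ball (0 : EuclideanSpace ℝ (Fin n)) 1)).toReal :=
    ENNReal.toReal_pos (Metric.measure_ball_pos volume 0 one_pos).ne' measure_ball_lt_top.ne
  have hQR := prod_range_two_mul_add_two_mul_sub_pos hn
  rw [prod_range_two_mul_add_two_mul_sub] at hQR
  have hn0 : (n : ℝ) ≠ 0 := Nat.cast_ne_zero.mpr (NeZero.ne n)
  rw [hsqrt, hsplit]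
  field_simp
end

section
/- For every real number p > 2 there exists a constant κ_p > 1 such that for every positive integer d and all nonnegative real numbers X₁, …, X_d one has (∑_{i=1}^{d} X_i)^p ≥ ∑_{i=1}^{d} X_i^p + (p/2)·κ_p·∑_{1 ≤ i ≠ j ≤ d} X_i^{p−1} X_j, where the last sum is over ordered pairs (i, j) with i ≠ j. -/
/-!
Taking `κ = 2 - 2/p`, so that `(p/2) κ = p - 1`, the inequality splits into one inequality per index.
With `S = ∑ X` and `a = X i`, Bernoulli's inequality `(1 + b/a)^(p-1) ≥ 1 + (p-1) b/a` for `b = S - a`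
gives `a^p + (p-1) a^(p-1) (S - a) ≤ a S^(p-1)`, and summing over `i` yields `S^p` on the right.
-/

open Finset Real

lemma Real.rpow_eq_mul_rpow_sub_one {a p : ℝ} (ha : 0 ≤ a) (hp : p ≠ 0) :
    a ^ p = a * a ^ (p - 1) := by
  rw [mul_comm, ← rpow_add_one' ha (by simpa using hp), sub_add_cancel]

lemma Real.rpow_add_mul_rpow_sub_one_mul_le {p a b : ℝ} (hp : 2 ≤ p) (ha : 0 ≤ a) (hb : 0 ≤ b) :
    a ^ p + (p - 1) * (a ^ (p - 1) * b) ≤ a * (a + b) ^ (p - 1) := by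
  rcases ha.eq_or_lt with rfl | ha
  · simp [zero_rpow (by linarith : p ≠ 0), zero_rpow (by linarith : p - 1 ≠ 0)]
  have bernoulli : 1 + (p - 1) * (b / a) ≤ (1 + b / a) ^ (p - 1) :=
    one_add_mul_self_le_rpow_one_add (by linarith [div_nonneg hb ha.le]) (by linarith)
  calc a ^ p + (p - 1) * (a ^ (p - 1) * b)
      = a * a ^ (p - 1) * (1 + (p - 1) * (b / a)) := by
        rw [rpow_eq_mul_rpow_sub_one ha.le (by linarith)]
        field_simp
    _ ≤ a * a ^ (p - 1) * (1 + b / a) ^ (p - 1) := by gcongr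
    _ = a * (a + b) ^ (p - 1) := by
        rw [mul_assoc, ← mul_rpow ha.le (by positivity), mul_one_add, mul_div_cancel₀ _ ha.ne']

lemma Real.sum_rpow_add_mul_sum_rpow_sub_one_mul_le {ι : Type*} [Fintype ι] [DecidableEq ι]
    {p : ℝ} (hp : 2 ≤ p) {X : ι → ℝ} (hX : ∀ i, 0 ≤ X i) :
    ∑ i, X i ^ p + (p - 1) * ∑ i, ∑ j ∈ univ \ {i}, X i ^ (p - 1) * X j ≤ (∑ i, X i) ^ p := by
  set S := ∑ i, X i
  have sum_others (i : ι) : ∑ j ∈ univ \ {i}, X j = S - X i := by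
    rw [sdiff_singleton_eq_erase, sum_erase_eq_sub (mem_univ i)]
  calc ∑ i, X i ^ p + (p - 1) * ∑ i, ∑ j ∈ univ \ {i}, X i ^ (p - 1) * X j
      = ∑ i, (X i ^ p + (p - 1) * (X i ^ (p - 1) * (S - X i))) := by
        simp only [← mul_sum, sum_others, sum_add_distrib]
    _ ≤ ∑ i, X i * S ^ (p - 1) := by
        gcongr with i
        have hb : 0 ≤ S - X i := sum_others i ▸ sum_nonneg fun j _ => hX j
        simpa only [add_sub_cancel] using rpow_add_mul_rpow_sub_one_mul_le hp (hX i) hb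
    _ = S ^ p := by
        rw [← sum_mul, ← rpow_eq_mul_rpow_sub_one (sum_nonneg fun i _ => hX i) (by linarith)]

theorem stmt4 (p : ℝ) (hp : 2 < p) :
    ∃ κ : ℝ, 1 < κ ∧
      ∀ (d : ℕ), 0 < d → ∀ X : Fin d → ℝ, (∀ i, 0 ≤ X i) →
        ∑ i, X i ^ p + p / 2 * κ *
            ∑ i, ∑ j ∈ Finset.univ \ {i}, X i ^ (p - 1) * X j ≤
          (∑ i, X i) ^ p := by
  have hp0 : 0 < p := by linarith
  refine ⟨2 - 2 / p, by linarith [(div_lt_one hp0).mpr hp], fun d _ X hX => ?_⟩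
  have hκ : p / 2 * (2 - 2 / p) = p - 1 := by field_simp
  rw [hκ]
  exact sum_rpow_add_mul_sum_rpow_sub_one_mul_le hp.le hX
end

section
/- For every real number p > 2 and every real τ > 1 there exists a constant θ = θ(p, τ) > 0 such that for every integer d ≥ 2 and all positive real numbers a₁, …, a_d the following holds: if a_{i₀} ≥ τ · a_{j₀} for some indices i₀ ≠ j₀, then ∑_{i=1}^{d} a_i² ≤ d^{1−2/p} · (1 − θ/d) · (∑_{i=1}^{d} a_i^p)^{2/p}. -/
open Finset Real

/-!
Write `β = 1 - 2 / p`. Hölder's inequality in the form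
`∑ mᵢ ^ β * Uᵢ ^ (1 - β) ≤ (∑ mᵢ) ^ β * (∑ Uᵢ) ^ (1 - β)` shows that a block of `k` entries
contributes at most `k ^ β * (∑ aᵢ ^ p) ^ (2 / p)` to `∑ aᵢ ^ 2`. For the pair
`a i₀ ≥ τ * a j₀` the two-point power-mean inequality is strict, and since the ratio
`a j₀ / a i₀` ranges over the compact interval `[0, τ⁻¹]`, it is uniformly strict: the pair
counts as `m < 2` entries instead of `2`. Merging it with the other `d - 2` entries gives the
bound `(d - (2 - m)) ^ β * (∑ aᵢ ^ p) ^ (2 / p)`, and Bernoulli's inequality turns this into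
the claim with `θ = β * (2 - m)`.
-/

theorem sum_rpow_mul_rpow_le {ι : Type*} (s : Finset ι) {β γ : ℝ} (hβ : 0 < β) (hγ : 0 < γ)
    (hβγ : β + γ = 1) {f g : ι → ℝ} (hf : ∀ i ∈ s, 0 ≤ f i) (hg : ∀ i ∈ s, 0 ≤ g i) :
    ∑ i ∈ s, f i ^ β * g i ^ γ ≤ (∑ i ∈ s, f i) ^ β * (∑ i ∈ s, g i) ^ γ := by
  have h := inner_le_Lp_mul_Lq_of_nonneg s (.inv_inv hβ hγ hβγ)
    (fun i hi => rpow_nonneg (hf i hi) β) (fun i hi => rpow_nonneg (hg i hi) γ)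
  rwa [one_div, one_div, inv_inv, inv_inv,
    sum_congr rfl fun i hi => rpow_rpow_inv (hf i hi) hβ.ne',
    sum_congr rfl fun i hi => rpow_rpow_inv (hg i hi) hγ.ne'] at h

theorem add_rpow_mul_rpow_le {β γ : ℝ} (hβ : 0 < β) (hγ : 0 < γ) (hβγ : β + γ = 1)
    {m n U V : ℝ} (hm : 0 ≤ m) (hn : 0 ≤ n) (hU : 0 ≤ U) (hV : 0 ≤ V) :
    m ^ β * U ^ γ + n ^ β * V ^ γ ≤ (m + n) ^ β * (U + V) ^ γ := by
  simpa using sum_rpow_mul_rpow_le univ hβ hγ hβγ (f := ![m, n]) (g := ![U, V])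
    (by simp [Fin.forall_fin_two, hm, hn]) (by simp [Fin.forall_fin_two, hU, hV])

theorem rpow_sub_le_rpow_mul_one_sub {β d δ : ℝ} (hβ₀ : 0 ≤ β) (hβ₁ : β ≤ 1) (hd : 0 < d)
    (hδ : δ ≤ d) :
    (d - δ) ^ β ≤ d ^ β * (1 - β * δ / d) := by
  have hδd : -1 ≤ -(δ / d) := by rw [neg_le_neg_iff, div_le_one hd]; exact hδ
  calc (d - δ) ^ β = d ^ β * (1 + -(δ / d)) ^ β := by
        rw [← mul_rpow hd.le (by linarith)]; congr 1; field_simp; ring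
    _ ≤ d ^ β * (1 + β * -(δ / d)) := by
        gcongr; exact rpow_one_add_le_one_add_mul_self hδd hβ₀ hβ₁
    _ = d ^ β * (1 - β * δ / d) := by ring

theorem rpow_rpow_two_div {p x : ℝ} (hp : p ≠ 0) (hx : 0 ≤ x) : (x ^ p) ^ (2 / p) = x ^ 2 := by
  rw [← rpow_mul hx, mul_div_cancel₀ _ hp, rpow_two]

theorem sq_add_sq_lt_two_rpow_mul_of_ne {p x y : ℝ} (hp : 2 < p) (hx : 0 ≤ x) (hy : 0 ≤ y)
    (hxy : x ≠ y) :
    x ^ 2 + y ^ 2 < 2 ^ (1 - 2 / p) * (x ^ p + y ^ p) ^ (2 / p) := by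
  have hconv : ((x ^ 2 + y ^ 2) / 2) ^ (p / 2) < (x ^ p + y ^ p) / 2 := by
    have hsq : x ^ 2 ≠ y ^ 2 := fun h => hxy ((sq_eq_sq₀ hx hy).1 h)
    have h := (strictConvexOn_rpow (p := p / 2) (by linarith)).2 (Set.mem_Ici.2 (sq_nonneg x))
      (Set.mem_Ici.2 (sq_nonneg y)) hsq (by norm_num : (0 : ℝ) < 1 / 2)
      (by norm_num : (0 : ℝ) < 1 / 2) (by norm_num)
    have hpow (z : ℝ) (hz : 0 ≤ z) : (z ^ 2) ^ (p / 2) = z ^ p := by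
      rw [← rpow_two, ← rpow_mul hz, mul_div_cancel₀ _ two_ne_zero]
    simp only [smul_eq_mul, hpow x hx, hpow y hy] at h
    calc ((x ^ 2 + y ^ 2) / 2) ^ (p / 2) = (1 / 2 * x ^ 2 + 1 / 2 * y ^ 2) ^ (p / 2) := by
          ring_nf
      _ < 1 / 2 * x ^ p + 1 / 2 * y ^ p := h
      _ = (x ^ p + y ^ p) / 2 := by ring
  have hmean : (x ^ 2 + y ^ 2) / 2 < ((x ^ p + y ^ p) / 2) ^ (2 / p) := by
    rw [← inv_div p 2, lt_rpow_inv_iff_of_pos (by positivity) (by positivity) (by positivity)]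
    exact hconv
  calc x ^ 2 + y ^ 2 < 2 * ((x ^ p + y ^ p) / 2) ^ (2 / p) := by linarith
    _ = 2 ^ (1 - 2 / p) * (x ^ p + y ^ p) ^ (2 / p) := by
      rw [div_rpow (by positivity) zero_le_two, rpow_sub zero_lt_two, rpow_one]
      ring

theorem exists_lt_two_sq_add_sq_le {p τ : ℝ} (hp : 2 < p) (hτ : 1 < τ) :
    ∃ m, 0 ≤ m ∧ m < 2 ∧ ∀ x y : ℝ, 0 < x → 0 ≤ y → τ * y ≤ x →
      x ^ 2 + y ^ 2 ≤ m ^ (1 - 2 / p) * (x ^ p + y ^ p) ^ (2 / p) := by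
  have hp0 : 0 < p := by linarith
  have hβ : 0 < 1 - 2 / p := by rw [sub_pos, div_lt_one hp0]; exact hp
  set ψ : ℝ → ℝ := fun u => (1 + u ^ 2) / (1 + u ^ p) ^ (2 / p) with hψ
  have hden (u : ℝ) (hu : 0 ≤ u) : 0 < (1 + u ^ p) ^ (2 / p) := by positivity
  have hψ_cont : ContinuousOn ψ (Set.Icc 0 τ⁻¹) := by
    refine ContinuousOn.div (by fun_prop) ?_ fun u hu => (hden u hu.1).ne'
    refine ContinuousOn.rpow_const ?_ fun u hu => Or.inr (by positivity)
    exact continuousOn_const.add fun u hu =>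
      (continuousAt_rpow_const u p (Or.inr hp0.le)).continuousWithinAt
  obtain ⟨u₀, hu₀, hmax⟩ := isCompact_Icc.exists_isMaxOn
    (Set.nonempty_Icc.2 (by positivity)) hψ_cont
  have hu₀_lt : u₀ < 1 := hu₀.2.trans_lt (inv_lt_one_of_one_lt₀ hτ)
  have hψu₀ : ψ u₀ < 2 ^ (1 - 2 / p) := by
    rw [hψ, div_lt_iff₀ (hden u₀ hu₀.1)]
    simpa using sq_add_sq_lt_two_rpow_mul_of_ne hp zero_le_one hu₀.1 hu₀_lt.ne'
  have hψu₀_nonneg : 0 ≤ ψ u₀ := div_nonneg (by positivity) (hden u₀ hu₀.1).le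
  refine ⟨ψ u₀ ^ (1 - 2 / p)⁻¹, by positivity, ?_, fun x y hx hy hxy => ?_⟩
  · rwa [rpow_inv_lt_iff_of_pos hψu₀_nonneg zero_le_two hβ]
  rw [rpow_inv_rpow hψu₀_nonneg hβ.ne']
  set u := y / x
  have hu : u ∈ Set.Icc 0 τ⁻¹ :=
    ⟨div_nonneg hy hx.le, by
      rw [div_le_iff₀ hx, inv_mul_eq_div, le_div_iff₀ (by linarith)]; linarith⟩
  have hxu : x * u = y := mul_div_cancel₀ y hx.ne'
  have hsq : x ^ 2 + y ^ 2 = x ^ 2 * (ψ u * (1 + u ^ p) ^ (2 / p)) := by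
    rw [div_mul_cancel₀ _ (hden u hu.1).ne', ← hxu]; ring
  have hpow : (x ^ p + y ^ p) ^ (2 / p) = x ^ 2 * (1 + u ^ p) ^ (2 / p) := by
    rw [← rpow_rpow_two_div hp0.ne' hx.le, ← mul_rpow (by positivity) (by positivity), mul_add,
      mul_one, ← mul_rpow hx.le hu.1, hxu]
  calc x ^ 2 + y ^ 2 = x ^ 2 * (ψ u * (1 + u ^ p) ^ (2 / p)) := hsq
    _ ≤ x ^ 2 * (ψ u₀ * (1 + u ^ p) ^ (2 / p)) := by gcongr; exact hmax hu
    _ = ψ u₀ * (x ^ p + y ^ p) ^ (2 / p) := by rw [hpow]; ring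

theorem sum_sq_le_of_sq_add_sq_le {p m : ℝ} (hp : 2 < p) (hm : 0 ≤ m) {d : ℕ} (a : Fin d → ℝ)
    (ha : ∀ k, 0 ≤ a k) {i j : Fin d} (hij : i ≠ j)
    (hpair : a i ^ 2 + a j ^ 2 ≤ m ^ (1 - 2 / p) * (a i ^ p + a j ^ p) ^ (2 / p)) :
    ∑ k, a k ^ 2 ≤ (m + (d - 2)) ^ (1 - 2 / p) * (∑ k, a k ^ p) ^ (2 / p) := by
  have hp0 : 0 < p := by linarith
  have hβ : 0 < 1 - 2 / p := by rw [sub_pos, div_lt_one hp0]; exact hp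
  have hap (k : Fin d) : 0 ≤ a k ^ p := rpow_nonneg (ha k) p
  set s : Finset (Fin d) := univ \ {i, j}
  have hsplit (f : Fin d → ℝ) : ∑ k, f k = (f i + f j) + ∑ k ∈ s, f k := by
    rw [← sum_pair hij, add_comm, sum_sdiff (subset_univ _)]
  have hcard : (#s : ℝ) = d - 2 := by
    rw [card_sdiff_of_subset (subset_univ _), card_univ, Nat.cast_sub (card_le_univ _),
      card_pair hij, Fintype.card_fin, Nat.cast_ofNat]
  have hrest : ∑ k ∈ s, a k ^ 2 ≤ ((d : ℝ) - 2) ^ (1 - 2 / p) * (∑ k ∈ s, a k ^ p) ^ (2 / p) := by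
    simpa [rpow_rpow_two_div hp0.ne' (ha _), hcard] using
      sum_rpow_mul_rpow_le s (γ := 2 / p) hβ (by positivity) (by ring) (f := 1) (g := (a · ^ p))
        (fun _ _ => zero_le_one) (fun k _ => hap k)
  rw [hsplit (a · ^ 2), hsplit (a · ^ p)]
  calc (a i ^ 2 + a j ^ 2) + ∑ k ∈ s, a k ^ 2
      ≤ m ^ (1 - 2 / p) * (a i ^ p + a j ^ p) ^ (2 / p)
          + ((d : ℝ) - 2) ^ (1 - 2 / p) * (∑ k ∈ s, a k ^ p) ^ (2 / p) :=
        add_le_add hpair hrest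
    _ ≤ (m + (d - 2)) ^ (1 - 2 / p) * ((a i ^ p + a j ^ p) + ∑ k ∈ s, a k ^ p) ^ (2 / p) :=
        add_rpow_mul_rpow_le hβ (by positivity) (by ring) hm (by rw [← hcard]; positivity)
          (add_nonneg (hap i) (hap j)) (sum_nonneg fun k _ => hap k)

theorem stmt5 (p τ : ℝ) (hp : 2 < p) (hτ : 1 < τ) :
    ∃ θ : ℝ, 0 < θ ∧
      ∀ (d : ℕ), 2 ≤ d → ∀ a : Fin d → ℝ, (∀ i, 0 < a i) →
        (∃ i₀ j₀ : Fin d, i₀ ≠ j₀ ∧ τ * a j₀ ≤ a i₀) →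
        ∑ i, a i ^ 2 ≤
          (d : ℝ) ^ (1 - 2 / p) * (1 - θ / d) * (∑ i, a i ^ p) ^ (2 / p) := by
  have hp0 : 0 < p := by linarith
  have hβ : 0 < 1 - 2 / p := by rw [sub_pos, div_lt_one hp0]; exact hp
  obtain ⟨m, hm0, hm2, hpair⟩ := exists_lt_two_sq_add_sq_le hp hτ
  refine ⟨(1 - 2 / p) * (2 - m), mul_pos hβ (by linarith), ?_⟩
  rintro d hd a ha ⟨i, j, hij, hτij⟩
  have hd2 : (2 : ℝ) ≤ d := by exact_mod_cast hd
  calc ∑ k, a k ^ 2 ≤ (d - (2 - m)) ^ (1 - 2 / p) * (∑ k, a k ^ p) ^ (2 / p) := by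
        rw [show (d : ℝ) - (2 - m) = m + (d - 2) by ring]
        exact sum_sq_le_of_sq_add_sq_le hp hm0 a (fun k => (ha k).le) hij
          (hpair _ _ (ha i) (ha j).le hτij)
    _ ≤ _ := mul_le_mul_of_nonneg_right (rpow_sub_le_rpow_mul_one_sub hβ.le
          (by linarith [div_pos two_pos hp0]) (by linarith) (by linarith))
          (rpow_nonneg (sum_nonneg fun k _ => rpow_nonneg (ha k).le p) _)
end

section
/- For every real number p > 2 there exists a constant κ_p > 1 such that for every measure space (X, μ), every positive integer d, all nonnegative measurable functions f₁, …, f_d : X → [0, ∞), and all positive weights a₁, …, a_d, one has ∫_X (∑_{i=1}^{d} a_i f_i)^p dμ ≥ ∑_{i=1}^{d} a_i^p ∫_X f_i^p dμ + (p/2)·κ_p·∑_{1 ≤ i ≠ j ≤ d} a_i^{p−1} a_j ∫_X f_i^{p−1} f_j dμ, where the last sum is over ordered pairs (i, j) with i ≠ j (all integrals being values in [0, ∞]). -/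
open MeasureTheory Finset ENNReal

/-!
With `κ = 2 (p - 1) / p` the claim follows by integrating a pointwise inequality for
`y_i = a_i f_i(x) ≥ 0` with sum `s`: `∑ y_i^p + (p - 1) ∑_{i ≠ j} y_i^(p-1) y_j ≤ s^p`.
Termwise it reads `y^p + (p - 1) y^(p-1) (s - y) ≤ y s^(p-1)`, which is Bernoulli's
inequality `1 + (p - 1) x ≤ (1 + x)^(p-1)` at `x = (s - y) / y`, scaled by `y^p`.
Passing to integrals only needs superadditivity of the lower Lebesgue integral.
-/

namespace Real

theorem rpow_add_mul_rpow_mul_sub_le {p y s : ℝ} (hp : 2 ≤ p) (hy : 0 ≤ y) (hys : y ≤ s) :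
    y ^ p + (p - 1) * (y ^ (p - 1) * (s - y)) ≤ y * s ^ (p - 1) := by
  rcases hy.eq_or_lt with rfl | hy
  · simp [zero_rpow (by linarith : p ≠ 0), zero_rpow (by linarith : p - 1 ≠ 0)]
  have hyp : y ^ p = y * y ^ (p - 1) := by
    rw [← rpow_one_add' hy.le (by linarith)]; ring_nf
  have bernoulli : 1 + (p - 1) * ((s - y) / y) ≤ (s / y) ^ (p - 1) := by
    have := one_add_mul_self_le_rpow_one_add (s := (s - y) / y)
      (by rw [le_div_iff₀ hy]; linarith) (p := p - 1) (by linarith)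
    rwa [show 1 + (s - y) / y = s / y by field_simp; ring] at this
  calc y ^ p + (p - 1) * (y ^ (p - 1) * (s - y))
      = y ^ p * (1 + (p - 1) * ((s - y) / y)) := by rw [hyp]; field_simp
    _ ≤ y ^ p * (s / y) ^ (p - 1) := by gcongr
    _ = y * s ^ (p - 1) := by
      rw [div_rpow (hy.le.trans hys) hy.le, hyp]; field_simp

theorem sum_rpow_add_mul_sum_sdiff_le {ι : Type*} [Fintype ι] [DecidableEq ι] {p : ℝ}
    (hp : 2 ≤ p) (y : ι → ℝ) (hy : ∀ i, 0 ≤ y i) :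
    ∑ i, y i ^ p + (p - 1) * ∑ i, ∑ j ∈ univ \ {i}, y i ^ (p - 1) * y j ≤ (∑ i, y i) ^ p := by
  set s := ∑ i, y i
  have hs : 0 ≤ s := sum_nonneg fun i _ => hy i
  have hsdiff : ∀ i, ∑ j ∈ univ \ {i}, y i ^ (p - 1) * y j = y i ^ (p - 1) * (s - y i) := by
    intro i
    rw [← mul_sum, sum_sdiff_eq_sub (subset_univ _), sum_singleton]
  calc ∑ i, y i ^ p + (p - 1) * ∑ i, ∑ j ∈ univ \ {i}, y i ^ (p - 1) * y j
      = ∑ i, (y i ^ p + (p - 1) * (y i ^ (p - 1) * (s - y i))) := by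
        simp only [hsdiff, sum_add_distrib, mul_sum]
    _ ≤ ∑ i, y i * s ^ (p - 1) := sum_le_sum fun i _ =>
        rpow_add_mul_rpow_mul_sub_le hp (hy i) (single_le_sum (fun j _ => hy j) (mem_univ i))
    _ = s ^ p := by
        rw [← sum_mul, ← rpow_one_add' hs (by linarith)]; ring_nf

end Real

namespace ENNReal

theorem sum_rpow_add_mul_sum_sdiff_le {ι : Type*} [Fintype ι] [DecidableEq ι] {p : ℝ}
    (hp : 2 ≤ p) (u : ι → ℝ≥0∞) (hu : ∀ i, u i ≠ ⊤) :
    ∑ i, u i ^ p + ENNReal.ofReal (p - 1) * ∑ i, ∑ j ∈ univ \ {i}, u i ^ (p - 1) * u j ≤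
      (∑ i, u i) ^ p := by
  lift u to ι → NNReal using hu
  have h1 : (0:ℝ) ≤ p - 1 := by linarith
  have h0 : (0:ℝ) ≤ p := by linarith
  rw [ENNReal.ofReal, ← ENNReal.ofNNReal_finsetSum]
  simp only [← ENNReal.coe_rpow_of_nonneg _ h0, ← ENNReal.coe_rpow_of_nonneg _ h1]
  norm_cast
  rw [← NNReal.coe_le_coe]
  push_cast [Real.coe_toNNReal _ h1]
  exact Real.sum_rpow_add_mul_sum_sdiff_le hp _ fun i => (u i).2

end ENNReal

theorem MeasureTheory.sum_lintegral_le_lintegral_sum {X ι : Type*} [MeasurableSpace X]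
    {μ : Measure X} (s : Finset ι) (F : ι → X → ℝ≥0∞) :
    ∑ i ∈ s, ∫⁻ x, F i x ∂μ ≤ ∫⁻ x, ∑ i ∈ s, F i x ∂μ := by
  classical
  induction s using Finset.induction_on with
  | empty => simp
  | insert i s hi ih =>
    simp only [sum_insert hi]
    exact (add_le_add le_rfl ih).trans (le_lintegral_add _ _)

theorem MeasureTheory.sum_mul_lintegral_le_lintegral_sum {X ι : Type*} [MeasurableSpace X]
    {μ : Measure X} (s : Finset ι) (c : ι → ℝ≥0∞) (F : ι → X → ℝ≥0∞) :
    ∑ i ∈ s, c i * ∫⁻ x, F i x ∂μ ≤ ∫⁻ x, ∑ i ∈ s, c i * F i x ∂μ :=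
  (sum_le_sum fun i _ => lintegral_const_mul_le (c i) (F i)).trans
    (sum_lintegral_le_lintegral_sum s _)

theorem stmt7 (p : ℝ) (hp : 2 < p) :
    ∃ κ : ℝ, 1 < κ ∧
      ∀ (X : Type*) [MeasurableSpace X] (μ : Measure X) (d : ℕ), 0 < d →
        ∀ f : Fin d → X → ℝ≥0∞, (∀ i, Measurable (f i)) → (∀ i x, f i x ≠ ⊤) →
        ∀ a : Fin d → ℝ, (∀ i, 0 < a i) →
          ∑ i, ENNReal.ofReal (a i ^ p) * ∫⁻ x, f i x ^ p ∂μ +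
              ENNReal.ofReal (p / 2 * κ) *
                ∑ i, ∑ j ∈ Finset.univ \ {i},
                  ENNReal.ofReal (a i ^ (p - 1) * a j) *
                    ∫⁻ x, f i x ^ (p - 1) * f j x ∂μ ≤
            ∫⁻ x, (∑ i, ENNReal.ofReal (a i) * f i x) ^ p ∂μ := by
  have hp0 : 0 < p := by linarith
  refine ⟨2 * (p - 1) / p, by rw [lt_div_iff₀ hp0]; linarith, ?_⟩
  intro X _ μ d _ f _ hf a ha
  rw [show p / 2 * (2 * (p - 1) / p) = p - 1 by field_simp]
  set u : Fin d → X → ℝ≥0∞ := fun i x => ENNReal.ofReal (a i) * f i x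
  have hpow : ∀ i x (q : ℝ), 0 ≤ q → ENNReal.ofReal (a i ^ q) * f i x ^ q = u i x ^ q :=
    fun i x q hq => by
      rw [ENNReal.mul_rpow_of_nonneg _ _ hq, ENNReal.ofReal_rpow_of_nonneg (ha i).le hq]
  have hcross : ∀ i j x, ENNReal.ofReal (a i ^ (p - 1) * a j) * (f i x ^ (p - 1) * f j x) =
      u i x ^ (p - 1) * u j x := fun i j x => by
    rw [← hpow i x _ (by linarith), ENNReal.ofReal_mul (by have := ha i; positivity)]
    ring
  calc _ ≤ ∫⁻ x, ∑ i, ENNReal.ofReal (a i ^ p) * f i x ^ p ∂μ +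
        ENNReal.ofReal (p - 1) * ∫⁻ x, ∑ i, ∑ j ∈ univ \ {i},
          ENNReal.ofReal (a i ^ (p - 1) * a j) * (f i x ^ (p - 1) * f j x) ∂μ := by
        gcongr
        · exact sum_mul_lintegral_le_lintegral_sum _ _ _
        · exact (sum_le_sum fun i _ => sum_mul_lintegral_le_lintegral_sum _ _ _).trans
            (sum_lintegral_le_lintegral_sum _ _)
    _ ≤ ∫⁻ x, (∑ i, u i x ^ p +
          ENNReal.ofReal (p - 1) * ∑ i, ∑ j ∈ univ \ {i}, u i x ^ (p - 1) * u j x) ∂μ := by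
        simp only [hpow _ _ _ hp0.le, hcross]
        exact (add_le_add le_rfl (lintegral_const_mul_le _ _)).trans (le_lintegral_add _ _)
    _ ≤ _ := lintegral_mono fun x =>
        ENNReal.sum_rpow_add_mul_sum_sdiff_le hp.le (u · x) fun i =>
          ENNReal.mul_ne_top ofReal_ne_top (hf i x)
end

section
/- Let k ≥ 1 and n > 2k be integers. There exists a constant C = C(n, k) > 0 such that for all real numbers 0 < δ < 1, all 0 < μ₁ ≤ δ and 0 < μ₂ ≤ δ, and every Θ ∈ ℝⁿ, one has ∫_{B(0, 2δ)} μ₁^{(n−2k)/2} (μ₁ + |x|)^{4−n} · μ₂^{(n−2k)/2} (μ₂² + |x − Θ|²)^{(2k−n)/2} dx ≤ C · (μ₁μ₂/(μ₁² + |Θ|²))^{(n−2k)/2} · (μ₁⁴ + δ⁴). -/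
/-!
Put `a = (n - 2k)/2`, `u = μ₁ + |x|` and `w = μ₂² + |x - Θ|²`. The triangle inequality gives
`μ₁² + |Θ|² ≤ 2 (u² + w)`, and raising it to the power `a` splits the integrand as
`4ᵃ (μ₁μ₂ / (μ₁² + |Θ|²))ᵃ (u^(4-2k) w^(-a) + u^(4-n))`.
Both terms have the form `u^q w^(-b)` with `2b < n` and `q - 2b = 4 - n > -n`. On `B(0, R)` with
`R = 2δ ≥ μ₁`, such a term is at most `(2R)^q |x - Θ|^(-2b)` if `q ≥ 0`, and at most
`|x|^(q-2b) + |x - Θ|^(q-2b)` if `q ≤ 0`. By the layer-cake formula,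
`∫_{B(0,R)} |y - c|^(-t) = O(R^(n-t))` uniformly in `c` for `0 ≤ t < n`, so both integrals are
`O(R^(n+q-2b)) = O(δ⁴)`.
-/

open MeasureTheory Real Metric Set Module

theorem Real.add_rpow_le_two_rpow_mul_rpow_add_rpow {x y p : ℝ} (hx : 0 ≤ x) (hy : 0 ≤ y)
    (hp : 0 ≤ p) : (x + y) ^ p ≤ 2 ^ p * (x ^ p + y ^ p) :=
  calc (x + y) ^ p ≤ (2 * max x y) ^ p := by
        rw [two_mul]; gcongr <;> first | positivity | simp
    _ = 2 ^ p * max x y ^ p := mul_rpow zero_le_two (hx.trans (le_max_left x y))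
    _ ≤ 2 ^ p * (x ^ p + y ^ p) := by
        gcongr
        rcases max_choice x y with h | h <;> rw [h]
        · exact le_add_of_nonneg_right (rpow_nonneg hy p)
        · exact le_add_of_nonneg_left (rpow_nonneg hx p)

theorem Real.rpow_mul_rpow_neg_le_of_le_two_mul_sq_add {u w s p a : ℝ} (hu : 0 < u) (hw : 0 < w)
    (hs : 0 < s) (ha : 0 ≤ a) (hsuw : s ≤ 2 * (u ^ 2 + w)) :
    u ^ p * w ^ (-a) ≤ 4 ^ a * s ^ (-a) * (u ^ (p + 2 * a) * w ^ (-a) + u ^ p) := by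
  have hsa : s ^ a ≤ 4 ^ a * (u ^ (2 * a) + w ^ a) :=
    calc s ^ a ≤ (2 * (u ^ 2 + w)) ^ a := by gcongr
      _ = 2 ^ a * (u ^ 2 + w) ^ a := mul_rpow zero_le_two (by positivity)
      _ ≤ 2 ^ a * (2 ^ a * ((u ^ 2) ^ a + w ^ a)) := by
          gcongr; exact add_rpow_le_two_rpow_mul_rpow_add_rpow (by positivity) hw.le ha
      _ = 4 ^ a * (u ^ (2 * a) + w ^ a) := by
          rw [← mul_assoc, ← mul_rpow zero_le_two zero_le_two, rpow_mul hu.le, rpow_two]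
          norm_num
  calc u ^ p * w ^ (-a) = s ^ (-a) * (s ^ a * (u ^ p * w ^ (-a))) := by
        rw [← mul_assoc, ← rpow_add hs, neg_add_cancel, rpow_zero, one_mul]
    _ ≤ s ^ (-a) * (4 ^ a * (u ^ (2 * a) + w ^ a) * (u ^ p * w ^ (-a))) := by gcongr
    _ = 4 ^ a * s ^ (-a) * (u ^ (p + 2 * a) * w ^ (-a) + u ^ p) := by
        rw [rpow_add hu, rpow_neg hw.le]
        field_simp

theorem Real.rpow_neg_le_rpow_neg_two_mul {y w b : ℝ} (hy : 0 < y) (hyw : y ^ 2 ≤ w)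
    (hb : 0 ≤ b) : w ^ (-b) ≤ y ^ (-(2 * b)) :=
  calc w ^ (-b) ≤ (y ^ 2) ^ (-b) := rpow_le_rpow_of_nonpos (by positivity) hyw (by linarith)
    _ = y ^ (-(2 * b)) := by rw [← rpow_two, ← rpow_mul hy.le]; ring_nf

theorem Real.rpow_mul_rpow_le_rpow_add_rpow {x u y q r : ℝ} (hx : 0 < x) (hxu : x ≤ u)
    (hy : 0 < y) (hq : q ≤ 0) (hr : r ≤ 0) :
    u ^ q * y ^ r ≤ x ^ (q + r) + y ^ (q + r) := by
  have hm : 0 < min x y := lt_min hx hy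
  calc u ^ q * y ^ r ≤ min x y ^ q * min x y ^ r :=
        mul_le_mul (rpow_le_rpow_of_nonpos hm ((min_le_left x y).trans hxu) hq)
          (rpow_le_rpow_of_nonpos hm (min_le_right x y) hr) (by positivity) (by positivity)
    _ = min x y ^ (q + r) := (rpow_add hm q r).symm
    _ ≤ x ^ (q + r) + y ^ (q + r) := by
        rcases min_choice x y with h | h <;> rw [h]
        · exact le_add_of_nonneg_right (by positivity)
        · exact le_add_of_nonneg_left (by positivity)

theorem Real.lintegral_Ioi_rpow_neg_div {t d R : ℝ} (ht : 0 < t) (htd : t < d) (hR : 0 < R) :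
    ∫⁻ s in Ioi (R ^ (-t)), ENNReal.ofReal (s ^ (-d / t)) =
      ENNReal.ofReal (t / (d - t) * R ^ (d - t)) := by
  have hT : 0 < R ^ (-t) := by positivity
  have hexp : -d / t < -1 := by rw [div_lt_iff₀ ht]; linarith
  rw [← ofReal_integral_eq_lintegral_ofReal (integrableOn_Ioi_rpow_of_lt hexp hT)
    ((ae_restrict_mem measurableSet_Ioi).mono fun s (hs : _ < s) => by
      have := hT.trans hs; positivity),
    integral_Ioi_rpow_of_lt hexp hT, ← rpow_mul hR.le,
    show -t * (-d / t + 1) = d - t by field_simp; ring,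
    show -d / t + 1 = -((d - t) / t) by field_simp; ring, neg_div_neg_eq, div_div_eq_mul_div]
  ring_nf

theorem setOf_le_norm_sub_rpow_neg_subset_closedBall {F : Type*} [SeminormedAddCommGroup F]
    {s t : ℝ} (hs : 0 < s) (ht : 0 < t) (c : F) :
    {y | s ≤ ‖y - c‖ ^ (-t)} ⊆ closedBall c (s ^ (-t⁻¹)) := by
  intro y (hy : s ≤ ‖y - c‖ ^ (-t))
  rw [mem_closedBall, dist_eq_norm]
  rcases (norm_nonneg (y - c)).eq_or_lt with h | h
  · rw [← h]; positivity
  · calc ‖y - c‖ = (‖y - c‖ ^ (-t)) ^ (-t⁻¹) := by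
          rw [← rpow_mul h.le, neg_mul_neg, mul_inv_cancel₀ ht.ne', rpow_one]
      _ ≤ s ^ (-t⁻¹) := rpow_le_rpow_of_nonpos hs hy (by simp [ht.le])

namespace MeasureTheory

theorem integral_le_mul_add_of_le_mul_add {α : Type*} [MeasurableSpace α] {μ : Measure α}
    {f g h : α → ℝ} {M A B : ℝ} (hf : 0 ≤ f) (hfm : AEStronglyMeasurable f μ) (hg : 0 ≤ g)
    (hgm : AEMeasurable g μ) (hh : 0 ≤ h) (hM : 0 ≤ M) (hA : 0 ≤ A) (hB : 0 ≤ B)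
    (hfgh : ∀ x, f x ≤ M * (g x + h x)) (hgA : ∫⁻ x, ENNReal.ofReal (g x) ∂μ ≤ ENNReal.ofReal A)
    (hhB : ∫⁻ x, ENNReal.ofReal (h x) ∂μ ≤ ENNReal.ofReal B) :
    ∫ x, f x ∂μ ≤ M * (A + B) := by
  rw [integral_eq_lintegral_of_nonneg_ae (.of_forall hf) hfm]
  refine ENNReal.toReal_le_of_le_ofReal (by positivity) ?_
  calc ∫⁻ x, ENNReal.ofReal (f x) ∂μ
      ≤ ∫⁻ x, ENNReal.ofReal M * (ENNReal.ofReal (g x) + ENNReal.ofReal (h x)) ∂μ := by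
        refine lintegral_mono fun x => ?_
        rw [← ENNReal.ofReal_add (hg x) (hh x), ← ENNReal.ofReal_mul hM]
        exact ENNReal.ofReal_le_ofReal (hfgh x)
    _ = ENNReal.ofReal M * ((∫⁻ x, ENNReal.ofReal (g x) ∂μ) + ∫⁻ x, ENNReal.ofReal (h x) ∂μ) := by
        rw [lintegral_const_mul' _ _ ENNReal.ofReal_ne_top,
          lintegral_add_left' hgm.ennreal_ofReal]
    _ ≤ ENNReal.ofReal (M * (A + B)) := by
        rw [ENNReal.ofReal_mul hM, ENNReal.ofReal_add hA hB]
        gcongr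

variable {E : Type*} [NormedAddCommGroup E] [NormedSpace ℝ E] [FiniteDimensional ℝ E]
  [MeasurableSpace E] [BorelSpace E] (μ : Measure E) [μ.IsAddHaarMeasure]

theorem addHaar_closedBall_eq_ofReal (x : E) {r : ℝ} (hr : 0 ≤ r) :
    μ (closedBall x r) = ENNReal.ofReal (μ.real (ball 0 1) * r ^ (finrank ℝ E : ℝ)) := by
  rw [Measure.addHaar_closedBall μ x hr, ← ofReal_measureReal measure_ball_lt_top.ne,
    ← ENNReal.ofReal_mul (by positivity), mul_comm, rpow_natCast]

theorem measure_setOf_le_norm_sub_rpow_neg_le {s t : ℝ} (hs : 0 < s) (ht : 0 < t) (c : E) :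
    μ {y | s ≤ ‖y - c‖ ^ (-t)} ≤
      ENNReal.ofReal (μ.real (ball 0 1)) * ENNReal.ofReal (s ^ (-(finrank ℝ E : ℝ) / t)) :=
  calc μ {y | s ≤ ‖y - c‖ ^ (-t)} ≤ μ (closedBall c (s ^ (-t⁻¹))) :=
        measure_mono (setOf_le_norm_sub_rpow_neg_subset_closedBall hs ht c)
    _ = _ := by
        rw [addHaar_closedBall_eq_ofReal μ c (by positivity), ← rpow_mul hs.le,
          ENNReal.ofReal_mul measureReal_nonneg]
        ring_nf

theorem exists_lintegral_ball_norm_sub_rpow_neg_le {t : ℝ} (ht : 0 ≤ t)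
    (htd : t < finrank ℝ E) :
    ∃ K > 0, ∀ R > 0, ∀ c : E, ∫⁻ y in ball 0 R, ENNReal.ofReal (‖y - c‖ ^ (-t)) ∂μ ≤
      ENNReal.ofReal (K * R ^ ((finrank ℝ E : ℝ) - t)) := by
  set d : ℝ := (finrank ℝ E : ℝ)
  set v := μ.real (ball (0 : E) 1)
  have hv : 0 < v := ENNReal.toReal_pos (measure_ball_pos μ 0 one_pos).ne' measure_ball_lt_top.ne
  rcases ht.eq_or_lt with rfl | ht
  · refine ⟨v, hv, fun R hR c => ?_⟩
    simp only [neg_zero, rpow_zero, ENNReal.ofReal_one, setLIntegral_const, one_mul, sub_zero]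
    exact (measure_mono ball_subset_closedBall).trans_eq (addHaar_closedBall_eq_ofReal μ 0 hR.le)
  have hdt : 0 < d - t := by linarith
  refine ⟨v * (1 + t / (d - t)), by positivity, fun R hR c => ?_⟩
  set μR := μ.restrict (ball 0 R)
  set T := R ^ (-t)
  have hT : 0 < T := by positivity
  -- layer cake, split at height `T = R ^ (-t)`: below it a superlevel set is bounded by the ball
  -- `B(0, R)` itself, above it by the ball `closedBall c (s ^ (-1/t))`
  have hsmall (s : ℝ) : μR {y | s ≤ ‖y - c‖ ^ (-t)} ≤ ENNReal.ofReal (v * R ^ d) := by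
    rw [Measure.restrict_apply' measurableSet_ball]
    exact (measure_mono (inter_subset_right.trans ball_subset_closedBall)).trans_eq
      (addHaar_closedBall_eq_ofReal μ 0 hR.le)
  have hlarge (s : ℝ) (hs : T < s) :
      μR {y | s ≤ ‖y - c‖ ^ (-t)} ≤ ENNReal.ofReal v * ENNReal.ofReal (s ^ (-d / t)) :=
    (Measure.restrict_apply_le _ _).trans
      (measure_setOf_le_norm_sub_rpow_neg_le μ (hT.trans hs) ht c)
  calc ∫⁻ y in ball 0 R, ENNReal.ofReal (‖y - c‖ ^ (-t)) ∂μ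
      = ∫⁻ s in Ioi 0, μR {y | s ≤ ‖y - c‖ ^ (-t)} :=
        lintegral_eq_lintegral_meas_le _ (.of_forall fun y => by positivity) (by fun_prop)
    _ = (∫⁻ s in Ioc 0 T, μR {y | s ≤ ‖y - c‖ ^ (-t)}) +
          ∫⁻ s in Ioi T, μR {y | s ≤ ‖y - c‖ ^ (-t)} := by
        rw [← Ioc_union_Ioi_eq_Ioi hT.le, lintegral_union measurableSet_Ioi Ioc_disjoint_Ioi_same]
    _ ≤ (∫⁻ _ in Ioc 0 T, ENNReal.ofReal (v * R ^ d)) +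
          ∫⁻ s in Ioi T, ENNReal.ofReal v * ENNReal.ofReal (s ^ (-d / t)) :=
        add_le_add (lintegral_mono hsmall) (setLIntegral_mono' measurableSet_Ioi hlarge)
    _ = ENNReal.ofReal (v * R ^ (d - t) + v * (t / (d - t) * R ^ (d - t))) := by
        rw [setLIntegral_const, volume_Ioc, sub_zero, ← ENNReal.ofReal_mul (by positivity),
          lintegral_const_mul' _ _ ENNReal.ofReal_ne_top, lintegral_Ioi_rpow_neg_div ht htd hR,
          ← ENNReal.ofReal_mul hv.le, ← ENNReal.ofReal_add (by positivity) (by positivity),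
          mul_assoc, ← rpow_add hR, ← sub_eq_add_neg]
    _ = _ := by ring_nf

theorem exists_lintegral_ball_add_norm_rpow_mul_norm_sub_rpow_neg_le_of_nonneg {q t : ℝ}
    (hq : 0 ≤ q) (ht : 0 ≤ t) (htd : t < finrank ℝ E) :
    ∃ K > 0, ∀ R > 0, ∀ m, 0 ≤ m → m ≤ R → ∀ c : E,
      ∫⁻ x in ball 0 R, ENNReal.ofReal ((m + ‖x‖) ^ q * ‖x - c‖ ^ (-t)) ∂μ ≤
        ENNReal.ofReal (K * R ^ ((finrank ℝ E : ℝ) + q - t)) := by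
  obtain ⟨K, hK, hint⟩ := exists_lintegral_ball_norm_sub_rpow_neg_le μ ht htd
  refine ⟨2 ^ q * K, by positivity, fun R hR m hm hmR c => ?_⟩
  calc ∫⁻ x in ball 0 R, ENNReal.ofReal ((m + ‖x‖) ^ q * ‖x - c‖ ^ (-t)) ∂μ
      ≤ ∫⁻ x in ball 0 R, ENNReal.ofReal ((2 * R) ^ q) * ENNReal.ofReal (‖x - c‖ ^ (-t)) ∂μ := by
        refine setLIntegral_mono' measurableSet_ball fun x hx => ?_
        rw [← ENNReal.ofReal_mul (by positivity)]
        refine ENNReal.ofReal_le_ofReal (mul_le_mul_of_nonneg_right ?_ (by positivity))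
        exact rpow_le_rpow (by positivity) (by linarith [mem_ball_zero_iff.1 hx]) hq
    _ = ENNReal.ofReal ((2 * R) ^ q) * ∫⁻ x in ball 0 R, ENNReal.ofReal (‖x - c‖ ^ (-t)) ∂μ :=
        lintegral_const_mul' _ _ ENNReal.ofReal_ne_top
    _ ≤ ENNReal.ofReal ((2 * R) ^ q) * ENNReal.ofReal (K * R ^ ((finrank ℝ E : ℝ) - t)) := by
        gcongr; exact hint R hR c
    _ = ENNReal.ofReal (2 ^ q * K * R ^ ((finrank ℝ E : ℝ) + q - t)) := by
        rw [← ENNReal.ofReal_mul (by positivity), mul_rpow zero_le_two hR.le, add_sub_right_comm,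
          add_comm, rpow_add hR]
        ring_nf

theorem exists_lintegral_ball_add_norm_rpow_mul_norm_sub_rpow_neg_le_of_nonpos {q t : ℝ}
    (hq : q ≤ 0) (ht : 0 ≤ t) (htd : t - q < finrank ℝ E) :
    ∃ K > 0, ∀ R > 0, ∀ m, 0 ≤ m → m ≤ R → ∀ c : E,
      ∫⁻ x in ball 0 R, ENNReal.ofReal ((m + ‖x‖) ^ q * ‖x - c‖ ^ (-t)) ∂μ ≤
        ENNReal.ofReal (K * R ^ ((finrank ℝ E : ℝ) + q - t)) := by
  have : Nontrivial E := Module.nontrivial_of_finrank_pos (R := ℝ) <| by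
    exact_mod_cast (by linarith : (0 : ℝ) < finrank ℝ E)
  obtain ⟨K, hK, hint⟩ := exists_lintegral_ball_norm_sub_rpow_neg_le μ (by linarith) htd
  refine ⟨2 * K, by positivity, fun R hR m hm hmR c => ?_⟩
  calc ∫⁻ x in ball 0 R, ENNReal.ofReal ((m + ‖x‖) ^ q * ‖x - c‖ ^ (-t)) ∂μ
      ≤ ∫⁻ x in ball 0 R, ENNReal.ofReal (‖x - 0‖ ^ (-(t - q))) +
          ENNReal.ofReal (‖x - c‖ ^ (-(t - q))) ∂μ := by
        refine setLIntegral_mono_ae (by fun_prop) ?_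
        filter_upwards [μ.ae_ne 0, μ.ae_ne c] with x hx0 hxc hx
        rw [← ENNReal.ofReal_add (by positivity) (by positivity), show -(t - q) = q + -t by ring]
        exact ENNReal.ofReal_le_ofReal (rpow_mul_rpow_le_rpow_add_rpow
          (norm_pos_iff.2 (sub_ne_zero.2 hx0)) (by simp [hm]) (norm_pos_iff.2 (sub_ne_zero.2 hxc))
          hq (by linarith))
    _ = (∫⁻ x in ball 0 R, ENNReal.ofReal (‖x - 0‖ ^ (-(t - q))) ∂μ) +
          ∫⁻ x in ball 0 R, ENNReal.ofReal (‖x - c‖ ^ (-(t - q))) ∂μ :=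
        lintegral_add_left (by fun_prop) _
    _ ≤ ENNReal.ofReal (K * R ^ ((finrank ℝ E : ℝ) - (t - q))) +
          ENNReal.ofReal (K * R ^ ((finrank ℝ E : ℝ) - (t - q))) :=
        add_le_add (hint R hR 0) (hint R hR c)
    _ = ENNReal.ofReal (2 * K * R ^ ((finrank ℝ E : ℝ) + q - t)) := by
        rw [← ENNReal.ofReal_add (by positivity) (by positivity)]
        ring_nf

theorem exists_lintegral_ball_add_norm_rpow_mul_sq_add_norm_sub_sq_rpow_neg_le {q b : ℝ}
    (hb : 0 ≤ b) (hbd : 2 * b < finrank ℝ E) (hqb : -(finrank ℝ E : ℝ) < q - 2 * b) :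
    ∃ K > 0, ∀ R > 0, ∀ m, 0 ≤ m → m ≤ R → ∀ (ν : ℝ) (c : E),
      ∫⁻ x in ball 0 R, ENNReal.ofReal ((m + ‖x‖) ^ q * (ν ^ 2 + ‖x - c‖ ^ 2) ^ (-b)) ∂μ ≤
        ENNReal.ofReal (K * R ^ ((finrank ℝ E : ℝ) + q - 2 * b)) := by
  have : Nontrivial E := Module.nontrivial_of_finrank_pos (R := ℝ) <| by
    exact_mod_cast (by linarith : (0 : ℝ) < finrank ℝ E)
  obtain ⟨K, hK, hint⟩ : ∃ K > 0, ∀ R > 0, ∀ m, 0 ≤ m → m ≤ R → ∀ c : E,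
      ∫⁻ x in ball 0 R, ENNReal.ofReal ((m + ‖x‖) ^ q * ‖x - c‖ ^ (-(2 * b))) ∂μ ≤
        ENNReal.ofReal (K * R ^ ((finrank ℝ E : ℝ) + q - 2 * b)) := by
    rcases le_total 0 q with hq | hq
    · exact exists_lintegral_ball_add_norm_rpow_mul_norm_sub_rpow_neg_le_of_nonneg μ hq
        (by positivity) hbd
    · exact exists_lintegral_ball_add_norm_rpow_mul_norm_sub_rpow_neg_le_of_nonpos μ hq
        (by positivity) (by linarith)
  refine ⟨K, hK, fun R hR m hm hmR ν c => le_trans ?_ (hint R hR m hm hmR c)⟩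
  refine setLIntegral_mono_ae (by fun_prop) ?_
  filter_upwards [μ.ae_ne c] with x hxc hx
  refine ENNReal.ofReal_le_ofReal (mul_le_mul_of_nonneg_left ?_ (by positivity))
  exact rpow_neg_le_rpow_neg_two_mul (norm_pos_iff.2 (sub_ne_zero.2 hxc))
    (le_add_of_nonneg_left (sq_nonneg ν)) hb

end MeasureTheory

theorem bubble_mul_bubble_le {F : Type*} [NormedAddCommGroup F] {a p μ₁ μ₂ : ℝ} (ha : 0 ≤ a)
    (hμ₁ : 0 < μ₁) (hμ₂ : 0 < μ₂) (x Θ : F) :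
    μ₁ ^ a * (μ₁ + ‖x‖) ^ p * (μ₂ ^ a * (μ₂ ^ 2 + ‖x - Θ‖ ^ 2) ^ (-a)) ≤
      4 ^ a * (μ₁ * μ₂ / (μ₁ ^ 2 + ‖Θ‖ ^ 2)) ^ a *
        ((μ₁ + ‖x‖) ^ (p + 2 * a) * (μ₂ ^ 2 + ‖x - Θ‖ ^ 2) ^ (-a) + (μ₁ + ‖x‖) ^ p) := by
  have hs : 0 < μ₁ ^ 2 + ‖Θ‖ ^ 2 := by positivity
  have htriangle : μ₁ ^ 2 + ‖Θ‖ ^ 2 ≤ 2 * ((μ₁ + ‖x‖) ^ 2 + (μ₂ ^ 2 + ‖x - Θ‖ ^ 2)) := by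
    have h : ‖Θ‖ ≤ ‖x‖ + ‖x - Θ‖ := by
      simpa [norm_sub_rev] using norm_le_norm_add_norm_sub' Θ x
    nlinarith [mul_self_le_mul_self (norm_nonneg Θ) h, norm_nonneg x, norm_nonneg (x - Θ),
      sq_nonneg μ₂, sq_nonneg (μ₁ + ‖x‖ - ‖x - Θ‖)]
  calc μ₁ ^ a * (μ₁ + ‖x‖) ^ p * (μ₂ ^ a * (μ₂ ^ 2 + ‖x - Θ‖ ^ 2) ^ (-a))
      = (μ₁ ^ a * μ₂ ^ a) * ((μ₁ + ‖x‖) ^ p * (μ₂ ^ 2 + ‖x - Θ‖ ^ 2) ^ (-a)) := by ring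
    _ ≤ (μ₁ ^ a * μ₂ ^ a) * (4 ^ a * (μ₁ ^ 2 + ‖Θ‖ ^ 2) ^ (-a) *
          ((μ₁ + ‖x‖) ^ (p + 2 * a) * (μ₂ ^ 2 + ‖x - Θ‖ ^ 2) ^ (-a) + (μ₁ + ‖x‖) ^ p)) := by
        refine mul_le_mul_of_nonneg_left ?_ (by positivity)
        exact rpow_mul_rpow_neg_le_of_le_two_mul_sq_add (by positivity) (by positivity) hs ha
          htriangle
    _ = _ := by
        rw [div_rpow (by positivity) hs.le, mul_rpow hμ₁.le hμ₂.le, rpow_neg hs.le]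
        ring

theorem stmt8 (k n : ℕ) (hk : 1 ≤ k) (hn : 2 * k < n) :
    ∃ C : ℝ, 0 < C ∧
      ∀ δ μ₁ μ₂ : ℝ, 0 < δ → δ < 1 → 0 < μ₁ → μ₁ ≤ δ → 0 < μ₂ → μ₂ ≤ δ →
      ∀ Θ : EuclideanSpace ℝ (Fin n),
        ∫ x in Metric.ball (0 : EuclideanSpace ℝ (Fin n)) (2 * δ),
            μ₁ ^ (((n : ℝ) - 2 * k) / 2) * (μ₁ + ‖x‖) ^ ((4 : ℝ) - n) *
              (μ₂ ^ (((n : ℝ) - 2 * k) / 2) *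
                (μ₂ ^ 2 + ‖x - Θ‖ ^ 2) ^ (((2 * k : ℝ) - n) / 2)) ≤
          C * (μ₁ * μ₂ / (μ₁ ^ 2 + ‖Θ‖ ^ 2)) ^ (((n : ℝ) - 2 * k) / 2) *
            (μ₁ ^ 4 + δ ^ 4) := by
  have hkn : (2 * k : ℝ) < n := by exact_mod_cast hn
  have hk1 : (1 : ℝ) ≤ k := by exact_mod_cast hk
  set a : ℝ := ((n : ℝ) - 2 * k) / 2 with ha
  have ha0 : 0 < a := by linarith
  obtain ⟨K₁, hK₁, h₁⟩ := exists_lintegral_ball_add_norm_rpow_mul_sq_add_norm_sub_sq_rpow_neg_le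
    (volume : Measure (EuclideanSpace ℝ (Fin n))) (q := 4 - n) le_rfl (by simp; omega) (by simp)
  obtain ⟨K₂, hK₂, h₂⟩ := exists_lintegral_ball_add_norm_rpow_mul_sq_add_norm_sub_sq_rpow_neg_le
    (volume : Measure (EuclideanSpace ℝ (Fin n))) (q := 4 - n + 2 * a) ha0.le
    (by simp; linarith) (by simp)
  simp only [finrank_euclideanSpace_fin, mul_zero, sub_zero, neg_zero, rpow_zero, mul_one,
    add_sub_cancel, show (n : ℝ) + (4 - n + 2 * a) - 2 * a = 4 by ring] at h₁ h₂
  refine ⟨4 ^ a * 16 * (K₂ + K₁), by positivity, fun δ μ₁ μ₂ hδ _ hμ₁ hμ₁δ hμ₂ _ Θ => ?_⟩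
  rw [show ((2 * k : ℝ) - n) / 2 = -a by rw [ha]; ring]
  calc _ ≤ 4 ^ a * (μ₁ * μ₂ / (μ₁ ^ 2 + ‖Θ‖ ^ 2)) ^ a *
        (K₂ * (2 * δ) ^ (4 : ℝ) + K₁ * (2 * δ) ^ (4 : ℝ)) :=
        integral_le_mul_add_of_le_mul_add (fun x => by positivity) (by fun_prop)
          (fun x => by positivity) (by fun_prop) (fun x => by positivity) (by positivity)
          (by positivity) (by positivity) (fun x => bubble_mul_bubble_le ha0.le hμ₁ hμ₂ x Θ)
          (h₂ (2 * δ) (by positivity) μ₁ hμ₁.le (by linarith) μ₂ Θ)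
          (h₁ (2 * δ) (by positivity) μ₁ hμ₁.le (by linarith) μ₂ Θ)
    _ = 4 ^ a * 16 * (K₂ + K₁) * (μ₁ * μ₂ / (μ₁ ^ 2 + ‖Θ‖ ^ 2)) ^ a * δ ^ 4 := by
        rw [rpow_ofNat]; ring
    _ ≤ _ := by gcongr; exact le_add_of_nonneg_left (by positivity)
end

section
/- Let k ≥ 1 and n > 2k be integers. There exists a constant C = C(n, k) > 0 such that for all real numbers 0 < δ < 1, all 0 < μ₁ ≤ δ and 0 < μ₂ ≤ δ, and every Θ ∈ ℝⁿ with |Θ| ≤ 3δ, one has ∫_{B(0, 2δ) ∖ B(Θ, δ/2)} μ₁^{(n+2k)/2} (μ₁ + |x − Θ|)^{−(n+2k)} · μ₂^{(n−2k)/2} (μ₂² + |x|²)^{(2k−n)/2} dx ≤ C · (μ₁μ₂/(μ₁² + |Θ|²))^{(n−2k)/2} · (μ₁/δ)^{2k}. -/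
/-!
Off `B(Θ, δ/2)` the first factor is at most `μ₁^{(n+2k)/2} (δ/2)^{-(n+2k)}`, so it can be pulled
out of the integral. What remains is integrated over all of `B(0, 2δ)` in polar coordinates: since
`(μ₂² + r²)^{(2k-n)/2} ≤ r^{2k-n}` and `2k > 0`, it is `O(δ^{2k})` uniformly in `μ₂`. Collecting the
powers gives `(μ₁μ₂/δ²)^{(n-2k)/2} (μ₁/δ)^{2k}`, and `μ₁² + |Θ|² ≤ 10 δ²` turns `δ²` into
`μ₁² + |Θ|²`.
-/

open MeasureTheory Real Metric Set Module

theorem setIntegral_Ioo_pow_mul_rpow_add_sq_le {d m : ℕ} (hm : 0 < m) (hmd : m ≤ d)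
    {c R : ℝ} (hc : 0 ≤ c) (hR : 0 ≤ R) :
    ∫ y in Ioo 0 R, y ^ (d - 1) * (c + y ^ 2) ^ (((m : ℝ) - d) / 2) ≤ R ^ m / m := by
  have hpow : ∫ y in Ioo 0 R, y ^ (m - 1) = R ^ m / m := by
    rw [← integral_Ioc_eq_integral_Ioo, ← intervalIntegral.integral_of_le hR, integral_pow,
      Nat.sub_add_cancel hm, zero_pow hm.ne', sub_zero, Nat.cast_sub hm, Nat.cast_one,
      sub_add_cancel]
  rw [← hpow]
  refine integral_mono_of_nonneg ?_ ?_ ?_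
  · filter_upwards [ae_restrict_mem measurableSet_Ioo] with y hy
    have := hy.1
    positivity
  · exact (continuous_pow _).integrableOn_Icc.mono_set Ioo_subset_Icc_self
  · filter_upwards [ae_restrict_mem measurableSet_Ioo] with y hy
    have hexp : ((m : ℝ) - d) / 2 ≤ 0 := by
      have : (m : ℝ) ≤ d := by exact_mod_cast hmd
      linarith
    calc y ^ (d - 1) * (c + y ^ 2) ^ (((m : ℝ) - d) / 2)
        ≤ y ^ (d - 1) * (y ^ 2) ^ (((m : ℝ) - d) / 2) := by
          refine mul_le_mul_of_nonneg_left ?_ (pow_nonneg hy.1.le _)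
          exact rpow_le_rpow_of_nonpos (pow_pos hy.1 2) (le_add_of_nonneg_left hc) hexp
      _ = y ^ (m - 1) := by
          rw [← rpow_natCast y (d - 1), ← rpow_natCast y 2, ← rpow_natCast y (m - 1),
            ← rpow_mul hy.1.le, ← rpow_add hy.1]
          congr 1
          push_cast [Nat.cast_sub (hm.trans_le hmd), Nat.cast_sub hm]
          ring

section HaarBall

variable {E : Type*} [NormedAddCommGroup E] [NormedSpace ℝ E] [FiniteDimensional ℝ E]
  [MeasurableSpace E] [BorelSpace E] (μ : Measure E) [μ.IsAddHaarMeasure]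

theorem setIntegral_ball_fun_norm [Nontrivial E] (R : ℝ) (f : ℝ → ℝ) :
    ∫ x in ball (0 : E) R, f ‖x‖ ∂μ =
      finrank ℝ E * μ.real (ball 0 1) * ∫ y in Ioo 0 R, y ^ (finrank ℝ E - 1) * f y := by
  have hball : ∀ x : E, (ball (0 : E) R).indicator (fun x ↦ f ‖x‖) x = (Iio R).indicator f ‖x‖ :=
    fun x ↦ by by_cases hx : ‖x‖ < R <;> simp [hx]
  have hIoo : ∀ y : ℝ, y ^ (finrank ℝ E - 1) • (Iio R).indicator f y =
      (Iio R).indicator (fun y ↦ y ^ (finrank ℝ E - 1) * f y) y :=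
    fun y ↦ by by_cases hy : y < R <;> simp [hy]
  rw [← integral_indicator measurableSet_ball, funext hball, integral_fun_norm_addHaar,
    funext hIoo, setIntegral_indicator measurableSet_Iio, Ioi_inter_Iio, nsmul_eq_mul,
    smul_eq_mul, mul_assoc]

theorem setIntegral_ball_rpow_add_norm_sq_le {m : ℕ} (hm : 0 < m) (hmd : m ≤ finrank ℝ E)
    {c R : ℝ} (hc : 0 ≤ c) (hR : 0 ≤ R) :
    ∫ x in ball (0 : E) R, (c + ‖x‖ ^ 2) ^ (((m : ℝ) - finrank ℝ E) / 2) ∂μ ≤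
      finrank ℝ E * μ.real (ball 0 1) * (R ^ m / m) := by
  have : Nontrivial E := nontrivial_of_finrank_pos (R := ℝ) (hm.trans_le hmd)
  rw [setIntegral_ball_fun_norm μ R fun r ↦ (c + r ^ 2) ^ (((m : ℝ) - finrank ℝ E) / 2)]
  gcongr
  exact setIntegral_Ioo_pow_mul_rpow_add_sq_le hm hmd hc hR

theorem setIntegral_ball_diff_ball_le {m : ℕ} (hm : 0 < m) (hmd : m ≤ finrank ℝ E) (θ : E)
    {δ μ₁ μ₂ : ℝ} (hδ : 0 < δ) (hμ₁ : 0 < μ₁) (hμ₂ : 0 < μ₂) :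
    ∫ x in ball (0 : E) (2 * δ) \ ball θ (δ / 2),
        μ₁ ^ (((finrank ℝ E : ℝ) + m) / 2) * (μ₁ + ‖x - θ‖) ^ (-((finrank ℝ E : ℝ) + m)) *
          (μ₂ ^ (((finrank ℝ E : ℝ) - m) / 2) *
            (μ₂ ^ 2 + ‖x‖ ^ 2) ^ (((m : ℝ) - finrank ℝ E) / 2)) ∂μ ≤
      finrank ℝ E * μ.real (ball 0 1) / m * 2 ^ (finrank ℝ E + 2 * m) *
        (μ₁ * μ₂ / δ ^ 2) ^ (((finrank ℝ E : ℝ) - m) / 2) * (μ₁ / δ) ^ m := by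
  set d : ℝ := (finrank ℝ E : ℝ)
  set A := μ₁ ^ ((d + m) / 2) * (δ / 2) ^ (-(d + m)) * μ₂ ^ ((d - m) / 2)
  have hA : 0 ≤ A := by positivity
  have hrescale : A * (2 * δ) ^ m =
      2 ^ (finrank ℝ E + 2 * m) * (μ₁ * μ₂ / δ ^ 2) ^ ((d - m) / 2) * (μ₁ / δ) ^ m := by
    refine log_injOn_pos (mem_Ioi.2 (by positivity)) (mem_Ioi.2 (by positivity)) ?_
    simp (disch := positivity) only [A, log_mul, log_div, log_rpow, log_pow]
    push_cast
    ring
  have hcont : Continuous fun x : E ↦ A * (μ₂ ^ 2 + ‖x‖ ^ 2) ^ (((m : ℝ) - d) / 2) :=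
    continuous_const.mul <| (continuous_const.add (continuous_norm.pow 2)).rpow_const
      fun x ↦ Or.inl (by positivity : 0 < μ₂ ^ 2 + ‖x‖ ^ 2).ne'
  have hint : IntegrableOn (fun x : E ↦ A * (μ₂ ^ 2 + ‖x‖ ^ 2) ^ (((m : ℝ) - d) / 2))
      (ball 0 (2 * δ)) μ :=
    (hcont.continuousOn.integrableOn_compact (isCompact_closedBall 0 (2 * δ))).mono_set
      ball_subset_closedBall
  have hkernel : ∀ x ∈ ball (0 : E) (2 * δ) \ ball θ (δ / 2),
      (μ₁ + ‖x - θ‖) ^ (-(d + m)) ≤ (δ / 2) ^ (-(d + m)) := by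
    rintro x ⟨-, hx⟩
    rw [mem_ball, dist_eq_norm, not_lt] at hx
    exact rpow_le_rpow_of_nonpos (by positivity) (by linarith) (by simp only [d]; linarith)
  calc _ ≤ ∫ x in ball (0 : E) (2 * δ) \ ball θ (δ / 2),
          A * (μ₂ ^ 2 + ‖x‖ ^ 2) ^ (((m : ℝ) - d) / 2) ∂μ := by
        refine integral_mono_of_nonneg (Filter.Eventually.of_forall fun x ↦ by positivity)
          (hint.mono_set sdiff_subset) ?_
        filter_upwards [ae_restrict_mem (measurableSet_ball.diff measurableSet_ball)] with x hx
        calc _ = μ₁ ^ ((d + m) / 2) * μ₂ ^ ((d - m) / 2) *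
              (μ₂ ^ 2 + ‖x‖ ^ 2) ^ (((m : ℝ) - d) / 2) * (μ₁ + ‖x - θ‖) ^ (-(d + m)) := by ring
          _ ≤ μ₁ ^ ((d + m) / 2) * μ₂ ^ ((d - m) / 2) *
              (μ₂ ^ 2 + ‖x‖ ^ 2) ^ (((m : ℝ) - d) / 2) * (δ / 2) ^ (-(d + m)) :=
            mul_le_mul_of_nonneg_left (hkernel x hx) (by positivity)
          _ = _ := by ring
    _ ≤ ∫ x in ball (0 : E) (2 * δ), A * (μ₂ ^ 2 + ‖x‖ ^ 2) ^ (((m : ℝ) - d) / 2) ∂μ :=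
        setIntegral_mono_set hint (Filter.Eventually.of_forall fun x ↦ by positivity)
          sdiff_subset.eventuallyLE
    _ ≤ A * (d * μ.real (ball 0 1) * ((2 * δ) ^ m / m)) := by
        rw [integral_const_mul]
        exact mul_le_mul_of_nonneg_left
          (setIntegral_ball_rpow_add_norm_sq_le μ hm hmd (sq_nonneg μ₂) (by positivity)) hA
    _ = _ := by linear_combination d * μ.real (ball 0 1) / m * hrescale

end HaarBall

theorem stmt9 (k n : ℕ) (hk : 1 ≤ k) (hn : 2 * k < n) :
    ∃ C : ℝ, 0 < C ∧
      ∀ δ μ₁ μ₂ : ℝ, 0 < δ → δ < 1 → 0 < μ₁ → μ₁ ≤ δ → 0 < μ₂ → μ₂ ≤ δ →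
      ∀ Θ : EuclideanSpace ℝ (Fin n), ‖Θ‖ ≤ 3 * δ →
        ∫ x in Metric.ball (0 : EuclideanSpace ℝ (Fin n)) (2 * δ) \ Metric.ball Θ (δ / 2),
            μ₁ ^ (((n : ℝ) + 2 * k) / 2) * (μ₁ + ‖x - Θ‖) ^ (-((n : ℝ) + 2 * k)) *
              (μ₂ ^ (((n : ℝ) - 2 * k) / 2) *
                (μ₂ ^ 2 + ‖x‖ ^ 2) ^ (((2 * k : ℝ) - n) / 2)) ≤
          C * (μ₁ * μ₂ / (μ₁ ^ 2 + ‖Θ‖ ^ 2)) ^ (((n : ℝ) - 2 * k) / 2) *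
            (μ₁ / δ) ^ (2 * k) := by
  set e : ℝ := ((n : ℝ) - 2 * k) / 2
  have he : 0 ≤ e := div_nonneg (sub_nonneg.2 (by exact_mod_cast hn.le)) zero_le_two
  have hV : 0 < volume.real (ball (0 : EuclideanSpace ℝ (Fin n)) 1) :=
    ENNReal.toReal_pos (measure_ball_pos _ _ one_pos).ne' measure_ball_lt_top.ne
  have hn₀ : 0 < n := by omega
  refine ⟨n * volume.real (ball (0 : EuclideanSpace ℝ (Fin n)) 1) / (2 * k) *
    2 ^ (n + 2 * (2 * k)) * 10 ^ e, by positivity, ?_⟩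
  intro δ μ₁ μ₂ hδ _ hμ₁ hμ₁δ hμ₂ _ Θ hΘ
  have hmain := setIntegral_ball_diff_ball_le volume (m := 2 * k) (by omega)
    (by rw [finrank_euclideanSpace_fin]; omega) Θ hδ hμ₁ hμ₂
  simp only [finrank_euclideanSpace_fin] at hmain
  push_cast at hmain
  refine hmain.trans ?_
  have hnorm : μ₁ ^ 2 + ‖Θ‖ ^ 2 ≤ 10 * δ ^ 2 := by nlinarith [norm_nonneg Θ]
  have hcompare : (μ₁ * μ₂ / δ ^ 2) ^ e ≤ 10 ^ e * (μ₁ * μ₂ / (μ₁ ^ 2 + ‖Θ‖ ^ 2)) ^ e := by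
    rw [← mul_rpow (by norm_num) (by positivity)]
    refine rpow_le_rpow (by positivity) ?_ he
    rw [mul_div_assoc', div_le_div_iff₀ (by positivity) (by positivity)]
    nlinarith [mul_pos hμ₁ hμ₂]
  calc _ ≤ _ := mul_le_mul_of_nonneg_right (mul_le_mul_of_nonneg_left hcompare (by positivity))
        (by positivity)
    _ = _ := by ring
end
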